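/- arXiv:1908.02384 — 3 statements merged into one kernel-verified Lean document; each statement's English description precedes it below -/
import Mathlib

section
/- For every integer m ≥ 1 and every integer ε with 1 ≤ ε ≤ 2^m, the convergent polynomials of the Thue–Morse continued fraction satisfy P(2^{m+1}−ε)(x) = Q(2^m−ε)(−x)·P(2^m−1)(x) − x·P(2^m−ε)(−x)·P(2^m−2)(x) and Q(2^{m+1}−ε)(x) = Q(2^m−ε)(−x)·Q(2^m−1)(x) − x·P(2^m−ε)(−x)·Q(2^m−2)(x) in ℤ[x], where U(−x) denotes the polynomial U evaluated at −x. -/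
open Polynomial

/-- The Thue–Morse ±1 sequence: t 0 = 1, t (2n) = t n, t (2n+1) = -t n. -/
def tmSeq : ℕ → ℤ
  | 0 => 1
  | n + 1 => if (n + 1) % 2 = 0 then tmSeq ((n + 1) / 2) else -tmSeq ((n + 1) / 2)
decreasing_by all_goals exact Nat.div_lt_self (Nat.succ_pos n) one_lt_two

/-- Numerators of the convergents of the Thue–Morse continued fraction. -/
noncomputable def Ptm : ℕ → ℤ[X]
  | 0 => 1
  | 1 => 1
  | n + 2 => Ptm (n + 1) + C (tmSeq (n + 2)) * X * Ptm n

/-- Denominators of the convergents of the Thue–Morse continued fraction. -/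
noncomputable def Qtm : ℕ → ℤ[X]
  | 0 => 1
  | 1 => 1 - X
  | n + 2 => Qtm (n + 1) + C (tmSeq (n + 2)) * X * Qtm n

/-- S_m(x) = Σ_{j<m} x^(2^j). -/
noncomputable def Spoly (m : ℕ) : ℤ[X] := ∑ j ∈ Finset.range m, X ^ (2 ^ j)
/-- S^e_m(x) = Σ_{j<m} x^(2^(2j)). -/
noncomputable def SePoly (m : ℕ) : ℤ[X] := ∑ j ∈ Finset.range m, X ^ (2 ^ (2 * j))
/-- S^o_m(x) = Σ_{j<m} x^(2^(2j+1)). -/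
noncomputable def SoPoly (m : ℕ) : ℤ[X] := ∑ j ∈ Finset.range m, X ^ (2 ^ (2 * j + 1))

lemma tm_odd (n : ℕ) : tmSeq (2 * n + 1) = -tmSeq n := by
  rw [show 2*n+1 = (2*n)+1 from rfl, tmSeq]
  have h1 : (2*n+1) % 2 = 1 := by omega
  have h2 : (2*n+1) / 2 = n := by omega
  rw [h1, h2]; norm_num

lemma tm_even (n : ℕ) (h : 0 < n) : tmSeq (2 * n) = tmSeq n := by
  obtain ⟨k, rfl⟩ := Nat.exists_eq_add_of_lt h
  rw [show 2*(0+k+1) = (2*k+1)+1 by ring, tmSeq]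
  have h1 : (2*k+1+1) % 2 = 0 := by omega
  have h2 : (2*k+1+1) / 2 = k+1 := by omega
  rw [h1, h2]; norm_num

lemma tm_flip (m : ℕ) : ∀ j, j < 2 ^ m → tmSeq (2 ^ m + j) = -tmSeq j := by
  induction m with
  | zero =>
    intro j hj
    interval_cases j
    rw [show 2^0 + 0 = 2*0+1 from rfl, tm_odd]
  | succ m ih =>
    intro j hj
    rcases Nat.even_or_odd j with ⟨j', rfl⟩ | ⟨j', rfl⟩
    · have hj' : j' < 2 ^ m := by rw [pow_succ] at hj; omega
      have : 2 ^ (m+1) + (j' + j') = 2 * (2 ^ m + j') := by rw [pow_succ]; ring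
      rw [this, tm_even _ (by positivity), ih j' hj']
      rcases Nat.eq_zero_or_pos j' with rfl | hpos
      · rfl
      · rw [show j' + j' = 2 * j' by ring, tm_even _ hpos]
    · have hj' : j' < 2 ^ m := by rw [pow_succ] at hj; omega
      have : 2 ^ (m+1) + (2 * j' + 1) = 2 * (2 ^ m + j') + 1 := by rw [pow_succ]; ring
      rw [this, tm_odd, ih j' hj', tm_odd]

lemma tm_main (m : ℕ) (hm : 1 ≤ m) : ∀ δ, δ < 2 ^ m →
    Ptm (2 ^ m + δ) =
      (Qtm δ).comp (-X) * Ptm (2 ^ m - 1) - X * (Ptm δ).comp (-X) * Ptm (2 ^ m - 2) ∧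
    Qtm (2 ^ m + δ) =
      (Qtm δ).comp (-X) * Qtm (2 ^ m - 1) - X * (Ptm δ).comp (-X) * Qtm (2 ^ m - 2) := by
  have h2m : 2 ≤ 2 ^ m := by
    calc 2 = 2^1 := rfl
    _ ≤ 2^m := Nat.pow_le_pow_right (by norm_num) hm
  obtain ⟨k, hk⟩ : ∃ k, 2 ^ m = k + 2 := ⟨2 ^ m - 2, by omega⟩
  have hk1 : 2 ^ m - 1 = k + 1 := by omega
  have hk2 : 2 ^ m - 2 = k := by omega
  have ht0 : tmSeq (k + 2) = -1 := by
    have := tm_flip m 0 (by positivity)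
    rw [add_zero, hk] at this
    simpa [tmSeq] using this
  have ht1 : tmSeq (k + 3) = 1 := by
    have := tm_flip m 1 (by omega)
    rw [hk] at this
    rw [show k+3 = k+2+1 from rfl, this, show (1:ℕ) = 2*0+1 from rfl, tm_odd]
    simp [tmSeq]
  intro δ
  induction δ using Nat.strong_induction_on with
  | _ δ ih =>
    match δ with
    | 0 =>
      intro _
      rw [hk1, hk2, show 2 ^ m + 0 = k + 2 by omega]
      constructor
      · rw [show Ptm (k+2) = Ptm (k+1) + C (tmSeq (k+2)) * X * Ptm k from rfl, ht0]
        simp [Qtm, Ptm]; ring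
      · rw [show Qtm (k+2) = Qtm (k+1) + C (tmSeq (k+2)) * X * Qtm k from rfl, ht0]
        simp [Qtm, Ptm]; ring
    | 1 =>
      intro _
      have h0 := ih 0 (by omega) (by omega)
      rw [hk1, hk2, show 2 ^ m + 0 = k + 2 by omega] at h0
      rw [hk1, hk2, show 2 ^ m + 1 = (k+1) + 2 by omega]
      constructor
      · rw [show Ptm (k+1+2) = Ptm (k+2) + C (tmSeq (k+3)) * X * Ptm (k+1) from rfl,
          ht1, h0.1]
        simp [Qtm, Ptm]; ring
      · rw [show Qtm (k+1+2) = Qtm (k+2) + C (tmSeq (k+3)) * X * Qtm (k+1) from rfl,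
          ht1, h0.2]
        simp [Qtm, Ptm]; ring
    | (δ+2) =>
      intro hδ
      have h1 := ih (δ+1) (by omega) (by omega)
      have h0 := ih δ (by omega) (by omega)
      rw [hk1, hk2] at h0 h1 ⊢
      have ht : tmSeq (2^m + (δ+2)) = -tmSeq (δ+2) := tm_flip m (δ+2) hδ
      have e1 : 2 ^ m + (δ + 2) = (2 ^ m + δ) + 2 := by ring
      constructor
      · rw [e1, show Ptm ((2^m + δ)+2) = Ptm ((2^m + δ)+1) + C (tmSeq ((2^m + δ)+2)) * X * Ptm (2^m + δ) from rfl, show (2^m + δ) + 1 = 2^m + (δ+1) by ring,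
          show (2^m + δ) + 2 = 2^m + (δ+2) by ring, ht, h1.1, h0.1,
          show Qtm (δ+2) = Qtm (δ+1) + C (tmSeq (δ+2)) * X * Qtm δ from rfl,
          show Ptm (δ+2) = Ptm (δ+1) + C (tmSeq (δ+2)) * X * Ptm δ from rfl]
        simp only [add_comp, mul_comp, C_comp, X_comp, map_neg]
        ring
      · rw [e1, show Qtm ((2^m + δ)+2) = Qtm ((2^m + δ)+1) + C (tmSeq ((2^m + δ)+2)) * X * Qtm (2^m + δ) from rfl, show (2^m + δ) + 1 = 2^m + (δ+1) by ring,
          show (2^m + δ) + 2 = 2^m + (δ+2) by ring, ht, h1.2, h0.2,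
          show Qtm (δ+2) = Qtm (δ+1) + C (tmSeq (δ+2)) * X * Qtm δ from rfl,
          show Ptm (δ+2) = Ptm (δ+1) + C (tmSeq (δ+2)) * X * Ptm δ from rfl]
        simp only [add_comp, mul_comp, C_comp, X_comp, map_neg]
        ring

/-- Lemma: recurrence for the convergents of the Thue–Morse continued fraction. -/
theorem tm_convergent_recurrence (m : ℕ) (hm : 1 ≤ m) (ε : ℕ) (hε1 : 1 ≤ ε)
    (hε2 : ε ≤ 2 ^ m) :
    Ptm (2 ^ (m + 1) - ε) =
      (Qtm (2 ^ m - ε)).comp (-X) * Ptm (2 ^ m - 1)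
        - X * (Ptm (2 ^ m - ε)).comp (-X) * Ptm (2 ^ m - 2) ∧
    Qtm (2 ^ (m + 1) - ε) =
      (Qtm (2 ^ m - ε)).comp (-X) * Qtm (2 ^ m - 1)
        - X * (Ptm (2 ^ m - ε)).comp (-X) * Qtm (2 ^ m - 2) := by
  have h := tm_main m hm (2 ^ m - ε) (by omega)
  rw [show 2 ^ (m+1) - ε = 2 ^ m + (2 ^ m - ε) by rw [pow_succ]; omega]
  exact h
end

section
/- For every integer m ≥ 1, the polynomial x·P(2^{2m}−2)(x) is congruent to x + S_{2m−1}(x)² − 2x·S^e_m(x) modulo 4 (equivalently, P(2^{2m}−2)(x) ≡ 1 + x^{−1}·S_{2m−1}(x)² − 2·S^e_m(x) mod 4, the quotient x^{−1}·S_{2m−1}(x)² being a polynomial), i.e. every coefficient of the difference is divisible by 4. -/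
open Polynomial

open Matrix

section Aux

lemma tmSeq_zero : tmSeq 0 = 1 := by rw [tmSeq]

lemma tmSeq_succ (n : ℕ) : tmSeq (n+1) = if (n + 1) % 2 = 0 then tmSeq ((n + 1) / 2) else -tmSeq ((n + 1) / 2) := by
  rw [tmSeq]

lemma tmSeq_even (n : ℕ) : tmSeq (2*n) = tmSeq n := by
  rcases n with _ | j
  · rfl
  · rw [show 2*(j+1) = (2*j+1)+1 by ring, tmSeq_succ]
    have h1 : (2*j+1+1) % 2 = 0 := by omega
    have h2 : (2*j+1+1) / 2 = j+1 := by omega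
    rw [h1, h2]; simp

lemma tmSeq_odd (n : ℕ) : tmSeq (2*n+1) = -tmSeq n := by
  rw [tmSeq_succ]
  have h1 : (2*n+1) % 2 ≠ 0 := by omega
  have h2 : (2*n+1) / 2 = n := by omega
  rw [if_neg h1, h2]

lemma tmSeq_one : tmSeq 1 = -1 := by
  have := tmSeq_odd 0
  rw [tmSeq_zero] at this
  simpa using this

lemma tmSeq_pow_add : ∀ k, ∀ i < 2^k, tmSeq (2^k + i) = -tmSeq i := by
  intro k
  induction k with
  | zero => intro i hi; interval_cases i; exact tmSeq_odd 0
  | succ k ih =>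
    intro i hi
    rcases Nat.even_or_odd i with ⟨a, ha⟩ | ⟨a, ha⟩
    · subst ha
      rw [show 2^(k+1) + (a+a) = 2*(2^k + a) by ring, tmSeq_even, ih a (by omega),
        show a+a = 2*a by ring, tmSeq_even]
    · subst ha
      rw [show 2^(k+1) + (2*a+1) = 2*(2^k + a)+1 by ring, tmSeq_odd, ih a (by omega),
        tmSeq_odd]

noncomputable def Mmat (n : ℕ) : Matrix (Fin 2) (Fin 2) ℤ[X] := !![1, C (tmSeq n) * X; 1, 0]

noncomputable def Bmat : ℕ → Matrix (Fin 2) (Fin 2) ℤ[X]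
  | 0 => Mmat 0
  | n + 1 => Mmat (n+1) * Bmat n

lemma Bmat_entries : ∀ n, Bmat (n+1) = !![Qtm (n+1), X * Ptm (n+1); Qtm n, X * Ptm n] := by
  intro n
  induction n with
  | zero =>
    show Mmat 1 * Mmat 0 = _
    rw [Mmat, Mmat, tmSeq_zero, tmSeq_one, Matrix.mul_fin_two,
      show Qtm 0 = 1 from rfl, show Qtm 1 = 1 - X from rfl,
      show Ptm 0 = 1 from rfl, show Ptm 1 = 1 from rfl]
    norm_num
    constructor <;> ring
  | succ n ih =>
    show Mmat (n+2) * Bmat (n+1) = _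
    rw [ih, Mmat, Matrix.mul_fin_two,
      show Ptm (n+2) = Ptm (n + 1) + C (tmSeq (n + 2)) * X * Ptm n from rfl,
      show Qtm (n+2) = Qtm (n + 1) + C (tmSeq (n + 2)) * X * Qtm n from rfl]
    congr 1
    ring

noncomputable def sig : ℤ[X] →+* ℤ[X] := Polynomial.compRingHom (-X)

lemma sig_apply (p : ℤ[X]) : sig p = p.comp (-X) := rfl

lemma sig_Mmat (k i : ℕ) (h : i < 2^k) : Mmat (2^k + i) = (sig.mapMatrix) (Mmat i) := by
  ext a b
  fin_cases a <;> fin_cases b <;>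
    simp [Mmat, sig_apply, tmSeq_pow_add k i h] <;> ring

lemma blk (k : ℕ) : ∀ j, j < 2^k → Bmat (2^k + j) = sig.mapMatrix (Bmat j) * Bmat (2^k - 1) := by
  intro j
  induction j with
  | zero =>
    intro h
    have h1 : 2^k + 0 = (2^k - 1) + 1 := by have := Nat.one_le_two_pow (n := k); omega
    rw [h1, show Bmat ((2^k-1)+1) = Mmat ((2^k-1)+1) * Bmat (2^k-1) from rfl, ← h1]
    congr 1
    show Mmat (2^k) = _
    rw [show (2^k : ℕ) = 2^k + 0 by ring, sig_Mmat k 0 (by positivity)]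
    rfl
  | succ j ih =>
    intro h
    have hj : j < 2^k := by omega
    rw [show 2^k + (j+1) = (2^k + j) + 1 by ring,
      show Bmat ((2^k+j)+1) = Mmat ((2^k+j)+1) * Bmat (2^k+j) from rfl,
      ih hj, show 2^k + j + 1 = 2^k + (j+1) by ring, sig_Mmat k (j+1) h, ← Matrix.mul_assoc,
      ← _root_.map_mul sig.mapMatrix]
    rfl

lemma doubling (k : ℕ) : Bmat (2^(k+1) - 1) = sig.mapMatrix (Bmat (2^k - 1)) * Bmat (2^k - 1) := by
  have h1 : 2^(k+1) - 1 = 2^k + (2^k - 1) := by have := Nat.one_le_two_pow (n := k); omega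
  rw [h1, blk k (2^k - 1) (by have := Nat.one_le_two_pow (n := k); omega)]

noncomputable def rho : Polynomial ℤ →+* Polynomial (ZMod 4) :=
  Polynomial.mapRingHom (Int.castRingHom (ZMod 4))

noncomputable def sig4 : Polynomial (ZMod 4) →+* Polynomial (ZMod 4) :=
  Polynomial.compRingHom (-X)

lemma rho_sig (p : Polynomial ℤ) : rho (sig p) = sig4 (rho p) := by
  show Polynomial.map _ (p.comp (-X)) = (Polynomial.map _ p).comp (-X)
  rw [Polynomial.map_comp]
  simp

lemma sig4_sig4 (p : Polynomial (ZMod 4)) : sig4 (sig4 p) = p := by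
  show (p.comp (-X)).comp (-X) = p
  rw [Polynomial.comp_assoc]
  simp

lemma rho_sig_mat (A : Matrix (Fin 2) (Fin 2) ℤ[X]) :
    rho.mapMatrix (sig.mapMatrix A) = sig4.mapMatrix (rho.mapMatrix A) :=
  Matrix.ext fun i j => rho_sig (A i j)

lemma sig4_mat_sig4_mat (A : Matrix (Fin 2) (Fin 2) (Polynomial (ZMod 4))) :
    sig4.mapMatrix (sig4.mapMatrix A) = A :=
  Matrix.ext fun i j => sig4_sig4 (A i j)

noncomputable def sE (m : ℕ) : Polynomial (ZMod 4) := ∑ j ∈ Finset.range m, X ^ (2 ^ (2 * j))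
noncomputable def sO (m : ℕ) : Polynomial (ZMod 4) := ∑ j ∈ Finset.range m, X ^ (2 ^ (2 * j + 1))

lemma sig4_X : sig4 (X : Polynomial (ZMod 4)) = -X := by
  show (X : Polynomial (ZMod 4)).comp (-X) = -X
  simp

lemma sig4_even_pow (e : ℕ) (he : Even e) : sig4 ((X : Polynomial (ZMod 4)) ^ e) = X ^ e := by
  show ((X : Polynomial (ZMod 4)) ^ e).comp (-X) = X ^ e
  simp [he.neg_pow]

lemma even_two_pow (k : ℕ) (hk : k ≠ 0) : Even ((2:ℕ)^k) :=
  ⟨2^(k-1), by rw [← two_mul, ← pow_succ']; congr 1; omega⟩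

lemma sE_split (n : ℕ) : sE (n+1) = X + ∑ j ∈ Finset.range n, X ^ ((2:ℕ)^(2*j+2)) := by
  rw [sE, Finset.sum_range_succ']
  rw [show (2:ℕ)^(2*0) = 1 by norm_num, pow_one, add_comm]
  congr 1

lemma sig4_sE (n : ℕ) : sig4 (sE (n+1)) = sE (n+1) - 2 * X := by
  rw [sE_split, map_add, sig4_X, map_sum,
    Finset.sum_congr rfl (fun j _ => sig4_even_pow ((2:ℕ)^(2*j+2)) (even_two_pow _ (by omega)))]
  ring

lemma sig4_sO (n : ℕ) : sig4 (sO n) = sO n := by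
  rw [sO, map_sum]
  refine Finset.sum_congr rfl fun j _ => ?_
  exact sig4_even_pow _ ⟨2^(2*j), by rw [← two_mul, ← pow_succ']⟩

lemma sq_sum {R : Type*} [CommRing R] (f : ℕ → R) (m : ℕ) :
    ∃ c, (∑ j ∈ Finset.range m, f j)^2 = (∑ j ∈ Finset.range m, (f j)^2) + 2*c := by
  induction m with
  | zero => exact ⟨0, by simp⟩
  | succ m ih =>
    obtain ⟨c, hc⟩ := ih
    exact ⟨c + (∑ j ∈ Finset.range m, f j) * f m, by
      rw [Finset.sum_range_succ, Finset.sum_range_succ, add_sq, hc]; ring⟩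

lemma sE_sq (n : ℕ) : ∃ c, (sE (n+1))^2 = sO n + X^((2:ℕ)^(2*n+1)) + 2*c := by
  obtain ⟨c, hc⟩ := sq_sum (fun j => (X : Polynomial (ZMod 4)) ^ ((2:ℕ)^(2*j))) (n+1)
  refine ⟨c, ?_⟩
  have h2 : ∑ j ∈ Finset.range (n+1), ((X:Polynomial (ZMod 4))^((2:ℕ)^(2*j)))^2
      = sO n + X^((2:ℕ)^(2*n+1)) := by
    rw [show sO n + (X:Polynomial (ZMod 4))^((2:ℕ)^(2*n+1))
        = ∑ j ∈ Finset.range (n+1), (X:Polynomial (ZMod 4))^((2:ℕ)^(2*j+1)) from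
      (Finset.sum_range_succ _ _).symm]
    exact Finset.sum_congr rfl fun j _ => by rw [← pow_mul, pow_succ]
  rw [sE, hc, h2]

lemma sO_sq (n : ℕ) : ∃ c, (sO n)^2 = sE (n+1) - X + 2*c := by
  obtain ⟨c, hc⟩ := sq_sum (fun j => (X : Polynomial (ZMod 4)) ^ ((2:ℕ)^(2*j+1))) n
  refine ⟨c, ?_⟩
  have h2 : ∑ j ∈ Finset.range n, ((X:Polynomial (ZMod 4))^((2:ℕ)^(2*j+1)))^2
      = sE (n+1) - X := by
    rw [sE_split, add_sub_cancel_left]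
    exact Finset.sum_congr rfl fun j _ => by rw [← pow_mul, ← pow_succ]
  rw [sO, hc, h2]

lemma h4zero : (4 : Polynomial (ZMod 4)) = 0 := by
  rw [← map_ofNat (Polynomial.C (R := ZMod 4)) 4, show (4:ZMod 4) = 0 by decide, map_zero]

lemma sSplit (n : ℕ) :
    (∑ j ∈ Finset.range (2*(n+1) - 1), (X:Polynomial (ZMod 4)) ^ (2^j)) = sE (n+1) + sO n := by
  induction n with
  | zero => simp [sE, sO]
  | succ n ih =>
    rw [show 2*(n+1+1)-1 = (2*(n+1)-1)+1+1 by omega, Finset.sum_range_succ,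
      Finset.sum_range_succ, ih,
      show sE (n+1+1) = sE (n+1) + X ^ ((2:ℕ)^(2*(n+1))) from Finset.sum_range_succ _ _,
      show sO (n+1) = sO n + X ^ ((2:ℕ)^(2*n+1)) from Finset.sum_range_succ _ _,
      show 2*(n+1)-1 = 2*n+1 by omega, show 2*n+1+1 = 2*(n+1) by omega]
    ring

lemma map_fin_two {R S : Type*} [CommRing R] [CommRing S] (f : R →+* S) (a b c d : R) :
    f.mapMatrix !![a, b; c, d] = !![f a, f b; f c, f d] := by
  refine Matrix.ext fun i j => ?_
  fin_cases i <;> fin_cases j <;> simp [RingHom.mapMatrix_apply]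

lemma fin_two_eq {R : Type*} {a b c d a' b' c' d' : R} (h1 : a = a') (h2 : b = b')
    (h3 : c = c') (h4 : d = d') : !![a, b; c, d] = !![a', b'; c', d'] := by
  rw [h1, h2, h3, h4]

noncomputable def NEmat (n : ℕ) : Matrix (Fin 2) (Fin 2) (Polynomial (ZMod 4)) :=
  !![1 + X + (sE (n+1) + sO n)^2 + 2*(sE (n+1) + sO n) + 2*X*(sE (n+1)),
     X + 2*X*(sO n);
     1 + 2*(sE (n+1) + sO n),
     X + (sE (n+1) + sO n)^2 - 2*X*(sE (n+1))]

lemma sig4_NEmat (n : ℕ) : sig4.mapMatrix (NEmat n) =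
    !![1 + (-X) + ((sE (n+1) - 2*X) + sO n)^2 + 2*((sE (n+1) - 2*X) + sO n) + 2*(-X)*(sE (n+1) - 2*X),
       (-X) + 2*(-X)*(sO n);
       1 + 2*((sE (n+1) - 2*X) + sO n),
       (-X) + ((sE (n+1) - 2*X) + sO n)^2 - 2*(-X)*(sE (n+1) - 2*X)] := by
  rw [NEmat, map_fin_two]
  refine fin_two_eq ?_ ?_ ?_ ?_ <;>
    simp only [_root_.map_add, _root_.map_mul, _root_.map_pow, _root_.map_one, _root_.map_sub,
      _root_.map_ofNat, sig4_X, sig4_sE, sig4_sO]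

set_option maxHeartbeats 4000000 in
lemma main_induction : ∀ n : ℕ, rho.mapMatrix (Bmat (2^(2*(n+1)) - 1)) = NEmat n := by
  intro n
  induction n with
  | zero =>
    have hB3 : Bmat (2^(2*1) - 1) = !![Qtm 3, X * Ptm 3; Qtm 2, X * Ptm 2] := Bmat_entries 2
    have ht2 : tmSeq 2 = -1 := by
      have := tmSeq_even 1
      rw [tmSeq_one] at this; simpa using this
    have ht3 : tmSeq 3 = 1 := by
      have := tmSeq_odd 1
      rw [tmSeq_one] at this; simpa using this
    have hP2 : Ptm 2 = 1 - X := by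
      show Ptm 1 + C (tmSeq 2) * X * Ptm 0 = _
      rw [ht2, show Ptm 1 = 1 from rfl, show Ptm 0 = 1 from rfl]
      simp; ring
    have hP3 : Ptm 3 = 1 := by
      show Ptm 2 + C (tmSeq 3) * X * Ptm 1 = _
      rw [ht3, hP2, show Ptm 1 = 1 from rfl]
      simp
    have hQ2 : Qtm 2 = 1 - 2*X := by
      show Qtm 1 + C (tmSeq 2) * X * Qtm 0 = _
      rw [ht2, show Qtm 1 = 1 - X from rfl, show Qtm 0 = 1 from rfl]
      simp; ring
    have hQ3 : Qtm 3 = 1 - X - X^2 := by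
      show Qtm 2 + C (tmSeq 3) * X * Qtm 1 = _
      rw [ht3, hQ2, show Qtm 1 = 1 - X from rfl]
      simp; ring
    rw [hB3, hP2, hP3, hQ2, hQ3, NEmat, map_fin_two]
    have hsE1 : sE 1 = X := by simp [sE]
    have hsO0 : sO 0 = (0 : Polynomial (ZMod 4)) := by simp [sO]
    have hXr : rho X = X := by simp [rho]
    refine fin_two_eq ?_ ?_ ?_ ?_ <;>
      simp only [hsE1, hsO0, _root_.map_add, _root_.map_mul, _root_.map_pow, _root_.map_one,
        _root_.map_sub, _root_.map_ofNat, hXr]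
    · linear_combination (-X - X^2 : Polynomial (ZMod 4)) * h4zero
    · ring
    · linear_combination (-X : Polynomial (ZMod 4)) * h4zero
    · ring
  | succ n ih =>
    have key1 := doubling (2*(n+1))
    have key2 := doubling (2*(n+1)+1)
    have hexp : 2*(n+1+1) = 2*(n+1)+1+1 := by ring
    rw [hexp, key2, key1]
    rw [_root_.map_mul rho.mapMatrix, rho_sig_mat, _root_.map_mul rho.mapMatrix, rho_sig_mat, ih,
      _root_.map_mul sig4.mapMatrix, sig4_mat_sig4_mat]
    rw [sig4_NEmat, NEmat]
    obtain ⟨cE, hE⟩ := sE_sq n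
    obtain ⟨cO, hO⟩ := sO_sq n
    have h4 := h4zero
    have hsE2 : sE (n+1+1) = sE (n+1) + (X^((2:ℕ)^(2*n+1)))^2 := by
      rw [show sE (n+1+1) = sE (n+1) + X ^ ((2:ℕ)^(2*(n+1))) from Finset.sum_range_succ _ _,
        ← pow_mul, show (2:ℕ)^(2*n+1)*2 = 2^(2*(n+1)) from by rw [← pow_succ]; congr 1 <;> omega]
    have hsO2 : sO (n+1) = sO n + X^((2:ℕ)^(2*n+1)) := Finset.sum_range_succ _ _
    rw [NEmat, hsE2, hsO2]
    set E := sE (n+1) with hsE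
    set O := sO n with hsO
    set y := (X : Polynomial (ZMod 4))^((2:ℕ)^(2*n+1)) with hy
    rw [Matrix.mul_fin_two, Matrix.mul_fin_two, Matrix.mul_fin_two]
    refine fin_two_eq ?_ ?_ ?_ ?_
    · linear_combination (2178 + 3144*cO + 460*cO^2 + 4446*cE + 1792*cE*cO + 1160*cE^2 + 8*cE^3 + 2223*y + 896*y*cO + 1160*y*cE + 12*y*cE^2 + 290*y^2 + 6*y^2*cE + y^3 + 2151*O + 1152*O*cO + 32*O*cO^2 + 3144*O*cE + 224*O*cE*cO + 460*O*cE^2 + 1572*O*y + 112*O*y*cO + 460*O*y*cE + 115*O*y^2 + 2018*O^2 + 228*O^2*cO + 1910*O^2*cE + 112*O^2*cE^2 + 955*O^2*y + 112*O^2*y*cE + 28*O^2*y^2 + 1577*O^3 + 16*O^3*cO + 784*O^3*cE + 392*O^3*y + 841*O^4 + 140*O^4*cE + 70*O^4*y + 246*O^5 + 28*O^6 + 56*E + 112*E*cE + 32*E*cE^2 + 56*E*y + 32*E*y*cE + 8*E*y^2 + 336*E*O + 368*E*O*cE + 32*E*O*cE^2 + 184*E*O*y + 32*E*O*y*cE +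 8*E*O*y^2 + 736*E*O^2 + 368*E*O^2*cE + 184*E*O^2*y + 736*E*O^3 + 112*E*O^3*cE + 56*E*O^3*y + 336*E*O^4 + 56*E*O^5 + 70*E^2 + 56*E^2*cE + 4*E^2*cE^2 + 28*E^2*y + 4*E^2*y*cE + E^2*y^2 + 308*E^2*O + 116*E^2*O*cE + 58*E^2*O*y + 477*E^2*O^2 + 56*E^2*O^2*cE + 28*E^2*O^2*y + 308*E^2*O^3 + 70*E^2*O^4 + 56*E^3 + 16*E^3*cE + 8*E^3*y + 176*E^3*O + 16*E^3*O*cE + 8*E^3*O*y + 176*E^3*O^2 + 56*E^3*O^3 + 28*E^4 + 2*E^4*cE + E^4*y + 57*E^4*O + 28*E^4*O^2 + 8*E^5 + 8*E^5*O + E^6 + (-7666)*X + (-5740)*X*cO + (-224)*X*cO^2 + (-9264)*X*cE + (-1120)*X*cE*cO + (-896)*X*cE^2 + (-4632)*X*y + (-560)*X*y*cO + (-896)*X*y*cE + (-224)*X*y^2 + (-6476)*X*O + (-1296)*X*O*cO + (-5296)*X*O*cE + (-224)*X*O*cE^2 + (-2648)*X*O*y + (-224)*X*O*y*cE + (-56)*X*O*y^2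 + (-5266)*X*O^2 + (-112)*X*O^2*cO + (-2464)*X*O^2*cE + (-1232)*X*O^2*y + (-3304)*X*O^3 + (-560)*X*O^3*cE + (-280)*X*O^3*y + (-1176)*X*O^4 + (-168)*X*O^5 + (-296)*X*E + (-336)*X*E*cE + (-32)*X*E*cE^2 + (-168)*X*E*y + (-32)*X*E*y*cE + (-8)*X*E*y^2 + (-1352)*X*E*O + (-704)*X*E*O*cE + (-352)*X*E*O*y + (-2088)*X*E*O^2 + (-336)*X*E*O^2*cE + (-168)*X*E*O^2*y + (-1288)*X*E*O^3 + (-280)*X*E*O^4 + (-288)*X*E^2 + (-112)*X*E^2*cE + (-56)*X*E^2*y + (-912)*X*E^2*O + (-112)*X*E^2*O*cE + (-56)*X*E^2*O*y + (-896)*X*E^2*O^2 + (-280)*X*E^2*O^3 + (-168)*X*E^3 + (-16)*X*E^3*cE + (-8)*X*E^3*y + (-344)*X*E^3*O + (-168)*X*E^3*O^2 + (-56)*X*E^4 + (-56)*X*E^4*O + (-8)*X*E^5 + 7205*X^2 + 2592*X^2*cO + 4132*X^2*cE + 32*X^2*cE^2 + 2066*X^2*y + 32*X^2*y*cE + 8*X^2*y^2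 + 4786*X^2*O + 352*X^2*O*cO + 1792*X^2*O*cE + 896*X^2*O*y + 3308*X^2*O^2 + 544*X^2*O^2*cE + 272*X^2*O^2*y + 1664*X^2*O^3 + 392*X^2*O^4 + 272*X^2*E + 128*X^2*E*cE + 64*X^2*E*y + 984*X^2*E*O + 160*X^2*E*O*cE + 80*X^2*E*O*y + 1136*X^2*E*O^2 + 448*X^2*E*O^3 + 178*X^2*E^2 + 16*X^2*E^2*cE + 8*X^2*E^2*y + 440*X^2*E^2*O + 272*X^2*E^2*O^2 + 64*X^2*E^3 + 80*X^2*E^3*O + 8*X^2*E^4 + (-848)*X^3 + (-448)*X^3*cO + 544*X^3*cE + 272*X^3*y + 136*X^3*O + 320*X^3*O*cE + 160*X^3*O*y + (-96)*X^3*O^2 + (-224)*X^3*O^3 + 360*X^3*E + 128*X^3*E*cE + 64*X^3*E*y + 480*X^3*E*O + 32*X^3*E*O^2 + 240*X^3*E^2 + 160*X^3*E^2*O + 64*X^3*E^3 + (-1096)*X^4 + (-224)*X^4*cE + (-112)*X^4*y + (-1072)*X^4*O + (-384)*X^4*O^2 + (-448)*X^4*E + (-448)*X^4*E*O + (-112)*X^4*E^2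 + 192*X^5 + 256*X^5*O + (-128)*X^5*E + 256*X^6) * hE + (2178 + 4446*cO + 1160*cO^2 + 8*cO^3 + 7180*cE + 5612*cE*cO + 224*cE*cO^2 + 4280*cE^2 + 560*cE^2*cO + 224*cE^3 + 3590*y + 2806*y*cO + 112*y*cO^2 + 4280*y*cE + 560*y*cE*cO + 336*y*cE^2 + 1070*y^2 + 140*y^2*cO + 168*y^2*cE + 28*y^3 + 2074*O + 2022*O*cO + 144*O*cO^2 + 5064*O*cE + 1296*O*cE*cO + 1680*O*cE^2 + 2532*O*y + 648*O*y*cO + 1680*O*y*cE + 420*O*y^2 + 1647*O^2 + 564*O^2*cO + 4*O^2*cO^2 + 2466*O^2*cE + 112*O^2*cE*cO + 280*O^2*cE^2 + 1233*O^2*y + 56*O^2*y*cO + 280*O^2*y*cE + 70*O^2*y^2 + 897*O^3 + 72*O^3*cO + 632*O^3*cE + 316*O^3*y + 274*O^4 + 2*O^4*cO + 56*O^4*cE + 28*O^4*y + 36*O^5 + O^6 + 2151*E + 3144*E*cO + 460*E*cO^2 + 4306*E*cE + 1792*E*cE*cO + 1048*E*cE^2 + 2153*E*y + 896*E*y*cO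 + 1048*E*y*cE + 262*E*y^2 + 1913*E*O + 1152*E*O*cO + 32*E*O*cO^2 + 2472*E*O*cE + 224*E*O*cE*cO + 224*E*O*cE^2 + 1236*E*O*y + 112*E*O*y*cO + 224*E*O*y*cE + 56*E*O*y^2 + 1290*E*O^2 + 228*E*O^2*cO + 840*E*O^2*cE + 420*E*O^2*y + 540*E*O^3 + 16*E*O^3*cO + 112*E*O^3*cE + 56*E*O^3*y + 113*E*O^4 + 8*E*O^5 + (-8317)*X + (-9656)*X*cO + (-908)*X*cO^2 + (-18294)*X*cE + (-6272)*X*cE*cO + (-5432)*X*cE^2 + (-9147)*X*y + (-3136)*X*y*cO + (-5432)*X*y*cE + (-1358)*X*y^2 + (-6487)*X*O + (-2976)*X*O*cO + (-32)*X*O*cO^2 + (-9704)*X*O*cE + (-672)*X*O*cE*cO + (-1120)*X*O*cE^2 + (-4852)*X*O*y + (-336)*X*O*y*cO + (-1120)*X*O*y*cE + (-280)*X*O*y^2 + (-3898)*X*O^2 + (-452)*X*O^2*cO + (-2968)*X*O^2*cE + (-1484)*X*O^2*y + (-1396)*X*O^3 + (-16)*X*O^3*cO + (-336)*X*O^3*cE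 + (-168)*X*O^3*y + (-225)*X*O^4 + (-8)*X*O^5 + (-7484)*X*E + (-5740)*X*E*cO + (-224)*X*E*cO^2 + (-8688)*X*E*cE + (-1120)*X*E*cE*cO + (-672)*X*E*cE^2 + (-4344)*X*E*y + (-560)*X*E*y*cO + (-672)*X*E*y*cE + (-168)*X*E*y^2 + (-5272)*X*E*O + (-1296)*X*E*O*cO + (-3360)*X*E*O*cE + (-1680)*X*E*O*y + (-2530)*X*E*O^2 + (-112)*X*E*O^2*cO + (-560)*X*E*O^2*cE + (-280)*X*E*O^2*y + (-632)*X*E*O^3 + (-56)*X*E*O^4 + 9016*X^2 + 5290*X^2*cO + 128*X^2*cO^2 + 11376*X^2*cE + 1568*X^2*cE*cO + 1088*X^2*cE^2 + 5688*X^2*y + 784*X^2*y*cO + 1088*X^2*y*cE + 272*X^2*y^2 + 5168*X^2*O + 1104*X^2*O*cO + 4208*X^2*O*cE + 2104*X^2*O*y + 2243*X^2*O^2 + 64*X^2*O^2*cO + 784*X^2*O^2*cE + 392*X^2*O^2*y + 544*X^2*O^3 + 32*X^2*O^4 + 6973*X^2*E + 2592*X^2*E*cO + 3776*X^2*E*cE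 + 1888*X^2*E*y + 3584*X^2*E*O + 352*X^2*E*O*cO + 896*X^2*E*O*cE + 448*X^2*E*O*y + 1208*X^2*E*O^2 + 176*X^2*E*O^3 + (-2075)*X^3 + (-864)*X^3*cO + (-656)*X^3*cE + (-328)*X^3*y + (-744)*X^3*O + (-128)*X^3*O*cO + (-448)*X^3*O*cE + (-224)*X^3*O*y + (-400)*X^3*O^2 + (-64)*X^3*O^3 + (-1136)*X^3*E + (-448)*X^3*E*cO + 64*X^3*E*cE + 32*X^3*E*y + (-560)*X^3*E*O + (-224)*X^3*E*O^2 + (-768)*X^4 + 128*X^4*cO + (-768)*X^4*cE + (-384)*X^4*y + (-256)*X^4*O + 64*X^4*O^2 + (-544)*X^4*E + 320*X^5 + 256*X^5*E) * hO + (1089*cO + 2223*cO^2 + 580*cO^3 + 4*cO^4 + 1089*cE + 5162*cE*cO + 3036*cE*cO^2 + 112*cE*cO^3 + 2223*cE^2 + 3036*cE^2*cO + 280*cE^2*cO^2 + 580*cE^3 + 112*cE^3*cO + 4*cE^4 + 544*y + 2581*y*cO + 1518*y*cO^2 + 56*y*cO^3 + 2223*y*cE + 3036*y*cE*cO + 280*y*cE*cO^2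 + 870*y*cE^2 + 168*y*cE^2*cO + 8*y*cE^3 + 555*y^2 + 759*y^2*cO + 70*y^2*cO^2 + 435*y^2*cE + 84*y^2*cE*cO + 6*y^2*cE^2 + 72*y^3 + 14*y^3*cO + 2*y^3*cE + 546*O + 1823*O*cO + 1126*O*cO^2 + 72*O*cO^3 + 2187*O*cE + 3556*O*cE*cO + 664*O*cE*cO^2 + 1862*O*cE^2 + 952*O*cE^2*cO + 232*O*cE^3 + 1093*O*y + 1778*O*y*cO + 332*O*y*cO^2 + 1862*O*y*cE + 952*O*y*cE*cO + 348*O*y*cE^2 + 465*O*y^2 + 238*O*y^2*cO + 174*O*y^2*cE + 29*O*y^3 + 546*E + 2187*E*cO + 1862*E*cO^2 + 232*E*cO^3 + 1823*E*cE + 3556*E*cE*cO + 952*E*cE*cO^2 + 1126*E*cE^2 + 664*E*cE^2*cO + 72*E*cE^3 + 911*E*y + 1778*E*y*cO + 476*E*y*cO^2 + 1126*E*y*cE + 664*E*y*cE*cO + 108*E*y*cE^2 + 281*E*y^2 + 166*E*y^2*cO + 54*E*y^2*cE + 9*E*y^3 + 546*E*O + 1462*E*O*cO + 612*E*O*cO^2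 + 16*E*O*cO^3 + 1462*E*O*cE + 1560*E*O*cE*cO + 112*E*O*cE*cO^2 + 612*E*O*cE^2 + 112*E*O*cE^2*cO + 16*E*O*cE^3 + 731*E*O*y + 780*E*O*y*cO + 56*E*O*y*cO^2 + 612*E*O*y*cE + 112*E*O*y*cE*cO + 24*E*O*y*cE^2 + 153*E*O*y^2 + 28*E*O*y^2*cO + 12*E*O*y^2*cE + 2*E*O*y^3 + (-547)*X + (-5270)*X*cO + (-5118)*X*cO^2 + (-456)*X*cO^3 + (-5628)*X*cE + (-13420)*X*cE*cO + (-3304)*X*cE*cO^2 + (-5702)*X*cE^2 + (-3416)*X*cE^2*cO + (-504)*X*cE^3 + (-2814)*X*y + (-6710)*X*y*cO + (-1652)*X*y*cO^2 + (-5702)*X*y*cE + (-3416)*X*y*cE*cO + (-756)*X*y*cE^2 + (-1426)*X*y^2 + (-854)*X*y^2*cO + (-378)*X*y^2*cE + (-63)*X*y^3 + (-2451)*X*O + (-5184)*X*O*cO + (-1580)*X*O*cO^2 + (-16)*X*O*cO^3 + (-6820)*X*O*cE + (-6104)*X*O*cE*cO + (-336)*X*O*cE*cO^2 + (-3292)*X*O*cE^2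 + (-560)*X*O*cE^2*cO + (-112)*X*O*cE^3 + (-3410)*X*O*y + (-3052)*X*O*y*cO + (-168)*X*O*y*cO^2 + (-3292)*X*O*y*cE + (-560)*X*O*y*cE*cO + (-168)*X*O*y*cE^2 + (-823)*X*O*y^2 + (-140)*X*O*y^2*cO + (-84)*X*O*y^2*cE + (-14)*X*O*y^3 + (-2633)*X*E + (-6942)*X*E*cO + (-3212)*X*E*cO^2 + (-112)*X*E*cO^3 + (-5798)*X*E*cE + (-6360)*X*E*cE*cO + (-560)*X*E*cE*cO^2 + (-1788)*X*E*cE^2 + (-336)*X*E*cE^2*cO + (-16)*X*E*cE^3 + (-2899)*X*E*y + (-3180)*X*E*y*cO + (-280)*X*E*y*cO^2 + (-1788)*X*E*y*cE + (-336)*X*E*y*cE*cO + (-24)*X*E*y*cE^2 + (-447)*X*E*y^2 + (-84)*X*E*y^2*cO + (-12)*X*E*y^2*cE + (-2)*X*E*y^3 + (-2268)*X*E*O + (-3668)*X*E*O*cO + (-664)*X*E*O*cO^2 + (-3804)*X*E*O*cE + (-1904)*X*E*O*cE*cO + (-696)*X*E*O*cE^2 + (-1902)*X*E*O*y + (-952)*X*E*O*y*cO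 + (-696)*X*E*O*y*cE + (-174)*X*E*O*y^2 + 2084*X^2 + 6922*X^2*cO + 2872*X^2*cO^2 + 64*X^2*cO^3 + 8176*X^2*cE + 8552*X^2*cE*cO + 784*X^2*cE*cO^2 + 3424*X^2*cE^2 + 544*X^2*cE^2*cO + 16*X^2*cE^3 + 4088*X^2*y + 4276*X^2*y*cO + 392*X^2*y*cO^2 + 3424*X^2*y*cE + 544*X^2*y*cE*cO + 24*X^2*y*cE^2 + 856*X^2*y^2 + 136*X^2*y^2*cO + 12*X^2*y^2*cE + 2*X^2*y^3 + 3454*X^2*O + 3976*X^2*O*cO + 560*X^2*O*cO^2 + 5852*X^2*O*cE + 2448*X^2*O*cE*cO + 1184*X^2*O*cE^2 + 2926*X^2*O*y + 1224*X^2*O*y*cO + 1184*X^2*O*y*cE + 296*X^2*O*y^2 + 4151*X^2*E + 6244*X^2*E*cO + 1384*X^2*E*cO^2 + 5152*X^2*E*cE + 2560*X^2*E*cE*cO + 504*X^2*E*cE^2 + 2576*X^2*E*y + 1280*X^2*E*y*cO + 504*X^2*E*y*cE + 126*X^2*E*y^2 + 2820*X^2*E*O + 2392*X^2*E*O*cO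 + 176*X^2*E*O*cO^2 + 2416*X^2*E*O*cE + 448*X^2*E*O*cE*cO + 80*X^2*E*O*cE^2 + 1208*X^2*E*O*y + 224*X^2*E*O*y*cO + 80*X^2*E*O*y*cE + 20*X^2*E*O*y^2 + (-2248)*X^3 + (-2360)*X^3*cO + (-464)*X^3*cO^2 + (-3268)*X^3*cE + (-944)*X^3*cE*cO + (-1634)*X^3*y + (-472)*X^3*y*cO + (-1486)*X^3*O + (-760)*X^3*O*cO + (-64)*X^3*O*cO^2 + (-848)*X^3*O*cE + (-224)*X^3*O*cE*cO + 160*X^3*O*cE^2 + (-424)*X^3*O*y + (-112)*X^3*O*y*cO + 160*X^3*O*y*cE + 40*X^3*O*y^2 + (-2230)*X^3*E + (-1432)*X^3*E*cO + (-224)*X^3*E*cO^2 + (-928)*X^3*E*cE + 32*X^3*E*cE*cO + 64*X^3*E*cE^2 + (-464)*X^3*E*y + 16*X^3*E*y*cO + 64*X^3*E*y*cE + 16*X^3*E*y^2 + (-924)*X^3*E*O + (-400)*X^3*E*O*cO + (-64)*X^3*E*O*cE + (-32)*X^3*E*O*y + 504*X^4 + (-168)*X^4*cO + 64*X^4*cO^2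 + (-384)*X^4*cE + (-384)*X^4*cE*cO + (-112)*X^4*cE^2 + (-192)*X^4*y + (-192)*X^4*y*cO + (-112)*X^4*y*cE + (-28)*X^4*y^2 + (-128)*X^4*O + (-96)*X^4*O*cO + (-480)*X^4*O*cE + (-240)*X^4*O*y + 20*X^4*E + (-128)*X^4*E*cO + (-432)*X^4*E*cE + (-216)*X^4*E*y + (-200)*X^4*E*O + (-224)*X^4*E*O*cE + (-112)*X^4*E*O*y + 196*X^5 + 128*X^5*cO + 288*X^5*cE + 144*X^5*y + 144*X^5*O + 128*X^5*O*cE + 64*X^5*O*y + 224*X^5*E + 128*X^5*E*cO + (-64)*X^5*E*cE + (-32)*X^5*E*y + 64*X^5*E*O + (-64)*X^6 + 128*X^6*cE + 64*X^6*y + 64*X^6*O) * h4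
    · linear_combination (318*X + 128*X*cO + 144*X*cE + 72*X*y + 292*X*O + 32*X*O*cE + 16*X*O*y + 224*X*O^2 + 96*X*O^3 + 16*X*E + 64*X*E*O + 64*X*E*O^2 + 8*X*E^2 + 16*X*E^2*O + (-1664)*X^2 + (-848)*X^2*cO + (-976)*X^2*cE + (-488)*X^2*y + (-1448)*X^2*O + (-160)*X^2*O*cO + (-496)*X^2*O*cE + (-248)*X^2*O*y + (-1072)*X^2*O^2 + (-160)*X^2*O^2*cE + (-80)*X^2*O^2*y + (-528)*X^2*O^3 + (-160)*X^2*O^4 + (-72)*X^2*E + (-16)*X^2*E*cE + (-8)*X^2*E*y + (-248)*X^2*E*O + (-32)*X^2*E*O*cE + (-16)*X^2*E*O*y + (-288)*X^2*E*O^2 + (-160)*X^2*E*O^3 + (-24)*X^2*E^2 + (-88)*X^2*E^2*O + (-80)*X^2*E^2*O^2 + (-8)*X^2*E^3 + (-16)*X^2*E^3*O + 2496*X^3 + 640*X^3*cO + 720*X^3*cE + 360*X^3*y + 1832*X^3*O + 160*X^3*O*cE + 80*X^3*O*y + 1216*X^3*O^2 + 480*X^3*O^3 + 96*X^3*E + 352*X^3*E*O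 + 320*X^3*E*O^2 + 40*X^3*E^2 + 80*X^3*E^2*O + (-1072)*X^4 + (-640)*X^4*O + (-320)*X^4*O^2 + (-32)*X^4*E + (-64)*X^4*E*O + (-96)*X^5 + (-192)*X^5*O) * hE + (318*X + 272*X*cO + 480*X*cE + 240*X*y + 268*X*O + 32*X*O*cO + 192*X*O*cE + 96*X*O*y + 136*X*O^2 + 16*X*O^3 + 304*X*E + 128*X*E*cO + 128*X*E*cE + 64*X*E*y + 208*X*E*O + 64*X*E*O^2 + (-1768)*X^2 + (-1552)*X^2*cO + (-64)*X^2*cO^2 + (-2640)*X^2*cE + (-640)*X^2*cE*cO + (-320)*X^2*cE^2 + (-1320)*X^2*y + (-320)*X^2*y*cO + (-320)*X^2*y*cE + (-80)*X^2*y^2 + (-1336)*X^2*O + (-432)*X^2*O*cO + (-1216)*X^2*O*cE + (-608)*X^2*O*y + (-696)*X^2*O^2 + (-32)*X^2*O^2*cO + (-320)*X^2*O^2*cE + (-160)*X^2*O^2*y + (-216)*X^2*O^3 + (-16)*X^2*O^4 + (-1576)*X^2*E + (-848)*X^2*E*cO + (-928)*X^2*E*cE + (-464)*X^2*E*y + (-1032)*X^2*E*O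 + (-160)*X^2*E*O*cO + (-320)*X^2*E*O*cE + (-160)*X^2*E*O*y + (-408)*X^2*E*O^2 + (-80)*X^2*E*O^3 + 2880*X^3 + 1488*X^3*cO + 2912*X^3*cE + 1456*X^3*y + 1816*X^3*O + 160*X^3*O*cO + 960*X^3*O*cE + 480*X^3*O*y + 728*X^3*O^2 + 80*X^3*O^3 + 2352*X^3*E + 640*X^3*E*cO + 640*X^3*E*cE + 320*X^3*E*y + 1216*X^3*E*O + 320*X^3*E*O^2 + (-1496)*X^4 + (-256)*X^4*cO + (-640)*X^4*cE + (-320)*X^4*y + (-624)*X^4*O + (-128)*X^4*O^2 + (-1024)*X^4*E + (-384)*X^4*E*O + 128*X^5*O) * hO + (159*X*cO + 136*X*cO^2 + 159*X*cE + 304*X*cE*cO + 72*X*cE^2 + 79*X*y + 152*X*y*cO + 72*X*y*cE + 18*X*y^2 + 81*X*O + 166*X*O*cO + 16*X*O*cO^2 + 182*X*O*cE + 96*X*O*cE*cO + 16*X*O*cE^2 + 91*X*O*y + 48*X*O*y*cO + 16*X*O*y*cE + 4*X*O*y^2 + 81*X*E + 220*X*E*cO + 64*X*E*cO^2 + 128*X*E*cE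 + 64*X*E*cE*cO + 64*X*E*y + 32*X*E*y*cO + 81*X*E*O + 112*X*E*O*cO + 80*X*E*O*cE + 40*X*E*O*y + (-82)*X^2 + (-952)*X^2*cO + (-776)*X^2*cO^2 + (-32)*X^2*cO^3 + (-952)*X^2*cE + (-1744)*X^2*cE*cO + (-320)*X^2*cE*cO^2 + (-488)*X^2*cE^2 + (-160)*X^2*cE^2*cO + (-476)*X^2*y + (-872)*X^2*y*cO + (-160)*X^2*y*cO^2 + (-488)*X^2*y*cE + (-160)*X^2*y*cE*cO + (-122)*X^2*y^2 + (-40)*X^2*y^2*cO + (-500)*X^2*O + (-888)*X^2*O*cO + (-216)*X^2*O*cO^2 + (-1016)*X^2*O*cE + (-688)*X^2*O*cE*cO + (-248)*X^2*O*cE^2 + (-508)*X^2*O*y + (-344)*X^2*O*y*cO + (-248)*X^2*O*y*cE + (-62)*X^2*O*y^2 + (-530)*X^2*E + (-1208)*X^2*E*cO + (-440)*X^2*E*cO^2 + (-728)*X^2*E*cE + (-624)*X^2*E*cE*cO + (-88)*X^2*E*cE^2 + (-364)*X^2*E*y + (-312)*X^2*E*y*cO + (-88)*X^2*E*y*cE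 + (-22)*X^2*E*y^2 + (-472)*X^2*E*O + (-624)*X^2*E*O*cO + (-80)*X^2*E*O*cO^2 + (-432)*X^2*E*O*cE + (-160)*X^2*E*O*cE*cO + (-16)*X^2*E*O*cE^2 + (-216)*X^2*E*O*y + (-80)*X^2*E*O*y*cO + (-16)*X^2*E*O*y*cE + (-4)*X^2*E*O*y^2 + 449*X^3 + 1828*X^3*cO + 760*X^3*cO^2 + 1908*X^3*cE + 1936*X^3*cE*cO + 440*X^3*cE^2 + 954*X^3*y + 968*X^3*y*cO + 440*X^3*y*cE + 110*X^3*y^2 + 998*X^3*O + 1176*X^3*O*cO + 80*X^3*O*cO^2 + 1400*X^3*O*cE + 480*X^3*O*cE*cO + 80*X^3*O*cE^2 + 700*X^3*O*y + 240*X^3*O*y*cO + 80*X^3*O*y*cE + 20*X^3*O*y^2 + 1140*X^3*E + 1760*X^3*E*cO + 320*X^3*E*cO^2 + 1008*X^3*E*cE + 320*X^3*E*cE*cO + 504*X^3*E*y + 160*X^3*E*y*cO + 860*X^3*E*O + 688*X^3*E*O*cO + 496*X^3*E*O*cE + 248*X^3*E*O*y + (-720)*X^4 + (-1120)*X^4*cO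 + (-128)*X^4*cO^2 + (-1264)*X^4*cE + (-320)*X^4*cE*cO + (-632)*X^4*y + (-160)*X^4*y*cO + (-728)*X^4*O + (-352)*X^4*O*cO + (-560)*X^4*O*cE + (-280)*X^4*O*y + (-968)*X^4*E + (-736)*X^4*E*cO + (-336)*X^4*E*cE + (-168)*X^4*E*y + (-520)*X^4*E*O + (-192)*X^4*E*O*cO + (-32)*X^4*E*O*cE + (-16)*X^4*E*O*y + 360*X^5 + 64*X^5*cO + 112*X^5*cE + 56*X^5*y + 104*X^5*O + 64*X^5*O*cO + (-96)*X^5*O*cE + (-48)*X^5*O*y + 224*X^5*E + 64*X^5*E*O + 16*X^6 + 32*X^6*E + 64*X^6*E*O) * h4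
    · linear_combination (2094 + 2800*cO + 224*cO^2 + 4052*cE + 1120*cE*cO + 784*cE^2 + 2026*y + 560*y*cO + 784*y*cE + 196*y^2 + 2066*O + 928*O*cO + 2800*O*cE + 224*O*cE^2 + 1400*O*y + 224*O*y*cE + 56*O*y^2 + 1932*O^2 + 112*O^2*cO + 1624*O^2*cE + 812*O^2*y + 1492*O^3 + 560*O^3*cE + 280*O^3*y + 756*O^4 + 168*O^5 + 56*E + 112*E*cE + 32*E*cE^2 + 56*E*y + 32*E*y*cE + 8*E*y^2 + 336*E*O + 368*E*O*cE + 184*E*O*y + 736*E*O^2 + 336*E*O^2*cE + 168*E*O^2*y + 728*E*O^3 + 280*E*O^4 + 70*E^2 + 56*E^2*cE + 28*E^2*y + 308*E^2*O + 112*E^2*O*cE + 56*E^2*O*y + 476*E^2*O^2 + 280*E^2*O^3 + 56*E^3 + 16*E^3*cE + 8*E^3*y + 176*E^3*O + 168*E^3*O^2 + 28*E^4 + 56*E^4*O + 8*E^5 + (-7900)*X + (-4688)*X*cO + (-8304)*X*cE + (-224)*X*cE^2 + (-4152)*X*y + (-224)*X*y*cE + (-56)*X*y^2 + (-6744)*X*O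 + (-672)*X*O*cO + (-4464)*X*O*cE + (-2232)*X*O*y + (-5448)*X*O^2 + (-1680)*X*O^2*cE + (-840)*X*O^2*y + (-3176)*X*O^3 + (-840)*X*O^4 + (-368)*X*E + (-400)*X*E*cE + (-200)*X*E*y + (-1640)*X*E*O + (-672)*X*E*O*cE + (-336)*X*E*O*y + (-2336)*X*E*O^2 + (-1120)*X*E*O^3 + (-360)*X*E^2 + (-112)*X*E^2*cE + (-56)*X*E^2*y + (-1056)*X*E^2*O + (-840)*X*E^2*O^2 + (-200)*X*E^3 + (-336)*X*E^3*O + (-56)*X*E^4 + 8772*X^2 + 1440*X^2*cO + 3552*X^2*cE + 1776*X^2*y + 6280*X^2*O + 1248*X^2*O*cE + 624*X^2*O*y + 4176*X^2*O^2 + 1408*X^2*O^3 + 680*X^2*E + 224*X^2*E*cE + 112*X^2*E*y + 1936*X^2*E*O + 1344*X^2*E*O^2 + 432*X^2*E^2 + 624*X^2*E^2*O + 112*X^2*E^3 + (-2632)*X^3 + 128*X^3*cE + 64*X^3*y + (-1536)*X^3*O + (-736)*X^3*O^2 + (-128)*X^3*E + (-192)*X^3*E*O + 64*X^3*E^2 +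 (-320)*X^4 + (-448)*X^4*O + (-448)*X^4*E + 384*X^5) * hE + (2094 + 4052*cO + 784*cO^2 + 6664*cE + 4368*cE*cO + 3472*cE^2 + 3332*y + 2184*y*cO + 3472*y*cE + 868*y^2 + 1988*O + 1736*O*cO + 32*O*cO^2 + 4608*O*cE + 672*O*cE*cO + 1120*O*cE^2 + 2304*O*y + 336*O*y*cO + 1120*O*y*cE + 280*O*y^2 + 1562*O^2 + 392*O^2*cO + 2072*O^2*cE + 1036*O^2*y + 812*O^3 + 16*O^3*cO + 336*O^3*cE + 168*O^3*y + 196*O^4 + 8*O^5 + 2066*E + 2800*E*cO + 224*E*cO^2 + 3912*E*cE + 1120*E*cE*cO + 672*E*cE^2 + 1956*E*y + 560*E*y*cO + 672*E*y*cE + 168*E*y^2 + 1828*E*O + 928*E*O*cO + 2128*E*O*cE + 1064*E*O*y + 1204*E*O^2 + 112*E*O^2*cO + 560*E*O^2*cE + 280*E*O^2*y + 456*E*O^3 + 56*E*O^4 + (-8526)*X + (-8528)*X*cO + (-224)*X*cO^2 + (-17432)*X*cE + (-3360)*X*cE*cO + (-3360)*X*cE^2 + (-8716)*X*y + (-1680)*X*y*cO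 + (-3360)*X*y*cE + (-840)*X*y^2 + (-6628)*X*O + (-2112)*X*O*cO + (-8368)*X*O*cE + (-4184)*X*O*y + (-3732)*X*O^2 + (-112)*X*O^2*cO + (-1680)*X*O^2*cE + (-840)*X*O^2*y + (-1048)*X*O^3 + (-56)*X*O^4 + (-7680)*X*E + (-4688)*X*E*cO + (-7584)*X*E*cE + (-3792)*X*E*y + (-5280)*X*E*O + (-672)*X*E*O*cO + (-2240)*X*E*O*cE + (-1120)*X*E*O*y + (-2232)*X*E*O^2 + (-336)*X*E*O^3 + 10544*X^2 + 4000*X^2*cO + 11280*X^2*cE + 5640*X^2*y + 5936*X^2*O + 288*X^2*O*cO + 2816*X^2*O*cE + 1408*X^2*O*y + 1944*X^2*O^2 + 144*X^2*O^3 + 8248*X^2*E + 1440*X^2*E*cO + 2688*X^2*E*cE + 1344*X^2*E*y + 3744*X^2*E*O + 720*X^2*E*O^2 + (-3888)*X^3 + (-320)*X^3*cO + (-1472)*X^3*cE + (-736)*X^3*y + (-1296)*X^3*O + (-160)*X^3*O^2 + (-2320)*X^3*E + (-640)*X^3*E*O + (-160)*X^4 + 128*X^4*O + 128*X^4*E)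 * hO + (1047*cO + 2026*cO^2 + 392*cO^3 + 1047*cE + 4732*cE*cO + 2296*cE*cO^2 + 2026*cE^2 + 2296*cE^2*cO + 392*cE^3 + 523*y + 2366*y*cO + 1148*y*cO^2 + 2026*y*cE + 2296*y*cE*cO + 588*y*cE^2 + 506*y^2 + 574*y^2*cO + 294*y^2*cE + 49*y^3 + 525*O + 1694*O*cO + 924*O*cO^2 + 16*O*cO^3 + 2046*O*cE + 3048*O*cE*cO + 336*O*cE*cO^2 + 1596*O*cE^2 + 560*O*cE^2*cO + 112*O*cE^3 + 1023*O*y + 1524*O*y*cO + 168*O*y*cO^2 + 1596*O*y*cE + 560*O*y*cE*cO + 168*O*y*cE^2 + 399*O*y^2 + 140*O*y^2*cO + 84*O*y^2*cE + 14*O*y^3 + 525*E + 2046*E*cO + 1596*E*cO^2 + 112*E*cO^3 + 1694*E*cE + 3048*E*cE*cO + 560*E*cE*cO^2 + 924*E*cE^2 + 336*E*cE^2*cO + 16*E*cE^3 + 847*E*y + 1524*E*y*cO + 280*E*y*cO^2 + 924*E*y*cE + 336*E*y*cE*cO + 24*E*y*cE^2 + 231*E*y^2 + 84*E*y^2*cO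 + 12*E*y^2*cE + 2*E*y^3 + 525*E*O + 1348*E*O*cO + 472*E*O*cO^2 + 1348*E*O*cE + 1232*E*O*cE*cO + 472*E*O*cE^2 + 674*E*O*y + 616*E*O*y*cO + 472*E*O*y*cE + 118*E*O*y^2 + (-526)*X + (-5276)*X*cO + (-4460)*X*cO^2 + (-112)*X*cO^3 + (-5616)*X*cE + (-12152)*X*cE*cO + (-1680)*X*cE*cO^2 + (-5020)*X*cE^2 + (-1680)*X*cE^2*cO + (-112)*X*cE^3 + (-2808)*X*y + (-6076)*X*y*cO + (-840)*X*y*cO^2 + (-5020)*X*y*cE + (-1680)*X*y*cE*cO + (-168)*X*y*cE^2 + (-1255)*X*y^2 + (-420)*X*y^2*cO + (-84)*X*y^2*cE + (-14)*X*y^3 + (-2490)*X*O + (-4920)*X*O*cO + (-1064)*X*O*cO^2 + (-6600)*X*O*cE + (-4688)*X*O*cE*cO + (-2568)*X*O*cE^2 + (-3300)*X*O*y + (-2344)*X*O*y*cO + (-2568)*X*O*y*cE + (-642)*X*O*y^2 + (-2666)*X*E + (-6672)*X*E*cO + (-2456)*X*E*cO^2 + (-5520)*X*E*cE + (-4912)*X*E*cE*cO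 + (-1208)*X*E*cE^2 + (-2760)*X*E*y + (-2456)*X*E*y*cO + (-1208)*X*E*y*cE + (-302)*X*E*y^2 + (-2316)*X*E*O + (-3400)*X*E*O*cO + (-336)*X*E*O*cO^2 + (-3544)*X*E*O*cE + (-1120)*X*E*O*cE*cO + (-336)*X*E*O*cE^2 + (-1772)*X*E*O*y + (-560)*X*E*O*y*cO + (-336)*X*E*O*y*cE + (-84)*X*E*O*y^2 + 2139*X^2 + 7404*X^2*cO + 2056*X^2*cO^2 + 8744*X^2*cE + 7200*X^2*cE*cO + 2616*X^2*cE^2 + 4372*X^2*y + 3600*X^2*y*cO + 2616*X^2*y*cE + 654*X^2*y^2 + 3900*X^2*O + 3856*X^2*O*cO + 144*X^2*O*cO^2 + 6120*X^2*O*cE + 1408*X^2*O*cE*cO + 624*X^2*O*cE^2 + 3060*X^2*O*y + 704*X^2*O*y*cO + 624*X^2*O*y*cE + 156*X^2*O*y^2 + 4606*X^2*E + 6296*X^2*E*cO + 720*X^2*E*cO^2 + 5056*X^2*E*cE + 1344*X^2*E*cE*cO + 112*X^2*E*cE^2 + 2528*X^2*E*y + 672*X^2*E*y*cO + 112*X^2*E*y*cE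 + 28*X^2*E*y^2 + 3240*X^2*E*O + 2112*X^2*E*O*cO + 2288*X^2*E*O*cE + 1144*X^2*E*O*y + (-2640)*X^3 + (-2944)*X^3*cO + (-160)*X^3*cO^2 + (-4136)*X^3*cE + (-736)*X^3*cE*cO + 64*X^3*cE^2 + (-2068)*X^3*y + (-368)*X^3*y*cO + 64*X^3*y*cE + 16*X^3*y^2 + (-2180)*X^3*O + (-720)*X^3*O*cO + (-1440)*X^3*O*cE + (-720)*X^3*O*y + (-3072)*X^3*E + (-1600)*X^3*E*cO + (-1104)*X^3*E*cE + (-552)*X^3*E*y + (-1496)*X^3*E*O + (-320)*X^3*E*O*cO + (-96)*X^3*E*O*cE + (-48)*X^3*E*O*y + 968*X^4 + 208*X^4*cE + 104*X^4*y + 248*X^4*O + 64*X^4*O*cO + (-224)*X^4*O*cE + (-112)*X^4*O*y + 512*X^4*E + 64*X^4*E*cO + (-224)*X^4*E*cE + (-112)*X^4*E*y + 48*X^4*E*O + 48*X^5 + 192*X^5*cE + 96*X^5*y + 96*X^5*O + 32*X^5*E + 64*X^5*E*O) * h4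
    · linear_combination (84 + 344*cO + 236*cO^2 + 394*cE + 672*cE*cO + 376*cE^2 + 8*cE^3 + 197*y + 336*y*cO + 376*y*cE + 12*y*cE^2 + 94*y^2 + 6*y^2*cE + y^3 + 85*O + 224*O*cO + 32*O*cO^2 + 344*O*cE + 224*O*cE*cO + 236*O*cE^2 + 172*O*y + 112*O*y*cO + 236*O*y*cE + 59*O*y^2 + 86*O^2 + 116*O^2*cO + 286*O^2*cE + 112*O^2*cE^2 + 143*O^2*y + 112*O^2*y*cE + 28*O^2*y^2 + 85*O^3 + 16*O^3*cO + 224*O^3*cE + 112*O^3*y + 85*O^4 + 140*O^4*cE + 70*O^4*y + 78*O^5 + 28*O^6 + 32*E*O*cE^2 + 32*E*O*y*cE + 8*E*O*y^2 + 32*E*O^2*cE + 16*E*O^2*y + 8*E*O^3 + 112*E*O^3*cE + 56*E*O^3*y + 56*E*O^4 + 56*E*O^5 + 4*E^2*cE^2 + 4*E^2*y*cE + E^2*y^2 + 4*E^2*O*cE + 2*E^2*O*y + E^2*O^2 + 56*E^2*O^2*cE + 28*E^2*O^2*y + 28*E^2*O^3 + 70*E^2*O^4 + 16*E^3*O*cE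 + 8*E^3*O*y + 8*E^3*O^2 + 56*E^3*O^3 + 2*E^4*cE + E^4*y + E^4*O + 28*E^4*O^2 + 8*E^5*O + E^6 + (-198)*X + (-1116)*X*cO + (-224)*X*cO^2 + (-1472)*X*cE + (-1120)*X*cE*cO + (-672)*X*cE^2 + (-736)*X*y + (-560)*X*y*cO + (-672)*X*y*cE + (-168)*X*y^2 + (-164)*X*O + (-624)*X*O*cO + (-1088)*X*O*cE + (-224)*X*O*cE^2 + (-544)*X*O*y + (-224)*X*O*y*cE + (-56)*X*O*y^2 + (-170)*X*O^2 + (-112)*X*O^2*cO + (-784)*X*O^2*cE + (-392)*X*O^2*y + (-256)*X*O^3 + (-560)*X*O^3*cE + (-280)*X*O^3*y + (-336)*X*O^4 + (-168)*X*O^5 + 16*X*E + (-32)*X*E*cE^2 + (-32)*X*E*y*cE + (-8)*X*E*y^2 + 64*X*E*O + (-32)*X*E*O*cE + (-16)*X*E*O*y + 56*X*E*O^2 + (-336)*X*E*O^2*cE + (-168)*X*E*O^2*y + (-168)*X*E*O^3 + (-280)*X*E*O^4 + 8*X*E^2 + 16*X*E^2*O + (-112)*X*E^2*O*cE + (-56)*X*E^2*O*y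 + (-56)*X*E^2*O^2 + (-280)*X*E^2*O^3 + (-16)*X*E^3*cE + (-8)*X*E^3*y + (-8)*X*E^3*O + (-168)*X*E^3*O^2 + (-56)*X*E^4*O + (-8)*X*E^5 + (-543)*X^2 + 800*X^2*cO + 1332*X^2*cE + 96*X^2*cE^2 + 666*X^2*y + 96*X^2*y*cE + 24*X^2*y^2 + (-558)*X^2*O + 224*X^2*O*cO + 896*X^2*O*cE + 448*X^2*O*y + (-340)*X^2*O^2 + 704*X^2*O^2*cE + 352*X^2*O^2*y + 176*X^2*O^3 + 312*X^2*O^4 + (-88)*X^2*E + (-264)*X^2*E*O + 288*X^2*E*O*cE + 144*X^2*E*O*y + (-48)*X^2*E*O^2 + 448*X^2*E*O^3 + (-22)*X^2*E^2 + 48*X^2*E^2*cE + 24*X^2*E^2*y + (-24)*X^2*E^2*O + 352*X^2*E^2*O^2 + 144*X^2*E^3*O + 24*X^2*E^4 + 1528*X^3 + (-128)*X^3*cO + (-576)*X^3*cE + (-288)*X^3*y + 1272*X^3*O + (-320)*X^3*O*cE + (-160)*X^3*O*y + 576*X^3*O^2 + (-224)*X^3*O^3 + 136*X^3*E + (-64)*X^3*E*cE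 + (-32)*X^3*E*y + 256*X^3*E*O + (-288)*X^3*E*O^2 + (-160)*X^3*E^2*O + (-32)*X^3*E^3 + (-1112)*X^4 + 32*X^4*cE + 16*X^4*y + (-560)*X^4*O + 64*X^4*O^2 + 64*X^4*E*O + 16*X^4*E^2) * hE + (84 + 394*cO + 376*cO^2 + 8*cO^3 + 516*cE + 1244*cE*cO + 224*cE*cO^2 + 808*cE^2 + 560*cE^2*cO + 224*cE^3 + 258*y + 622*y*cO + 112*y*cO^2 + 808*y*cE + 560*y*cE*cO + 336*y*cE^2 + 202*y^2 + 140*y^2*cO + 168*y^2*cE + 28*y^3 + 86*O + 286*O*cO + 112*O*cO^2 + 456*O*cE + 624*O*cE*cO + 560*O*cE^2 + 228*O*y + 312*O*y*cO + 560*O*y*cE + 140*O*y^2 + 85*O^2 + 172*O^2*cO + 4*O^2*cO^2 + 394*O^2*cE + 112*O^2*cE*cO + 280*O^2*cE^2 + 197*O^2*y + 56*O^2*y*cO + 280*O^2*y*cE + 70*O^2*y^2 + 85*O^3 + 56*O^3*cO + 296*O^3*cE + 148*O^3*y + 78*O^4 + 2*O^4*cO + 56*O^4*cE + 28*O^4*y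 + 28*O^5 + O^6 + 85*E + 344*E*cO + 236*E*cO^2 + 394*E*cE + 672*E*cE*cO + 376*E*cE^2 + 197*E*y + 336*E*y*cO + 376*E*y*cE + 94*E*y^2 + 85*E*O + 224*E*O*cO + 32*E*O*cO^2 + 344*E*O*cE + 224*E*O*cE*cO + 224*E*O*cE^2 + 172*E*O*y + 112*E*O*y*cO + 224*E*O*y*cE + 56*E*O*y^2 + 86*E*O^2 + 116*E*O^2*cO + 280*E*O^2*cE + 140*E*O^2*y + 84*E*O^3 + 16*E*O^3*cO + 112*E*O^3*cE + 56*E*O^3*y + 57*E*O^4 + 8*E*O^5 + (-223)*X + (-1384)*X*cO + (-684)*X*cO^2 + (-1822)*X*cE + (-2912)*X*cE*cO + (-2072)*X*cE^2 + (-911)*X*y + (-1456)*X*y*cO + (-2072)*X*y*cE + (-518)*X*y^2 + (-211)*X*O + (-864)*X*O*cO + (-32)*X*O*cO^2 + (-1592)*X*O*cE + (-672)*X*O*cE*cO + (-1120)*X*O*cE^2 + (-796)*X*O*y + (-336)*X*O*y*cO + (-1120)*X*O*y*cE + (-280)*X*O*y^2 + (-294)*X*O^2 + (-340)*X*O^2*cO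 + (-1288)*X*O^2*cE + (-644)*X*O^2*y + (-348)*X*O^3 + (-16)*X*O^3*cO + (-336)*X*O^3*cE + (-168)*X*O^3*y + (-169)*X*O^4 + (-8)*X*O^5 + (-212)*X*E + (-1116)*X*E*cO + (-224)*X*E*cO^2 + (-1488)*X*E*cE + (-1120)*X*E*cE*cO + (-672)*X*E*cE^2 + (-744)*X*E*y + (-560)*X*E*y*cO + (-672)*X*E*y*cE + (-168)*X*E*y^2 + (-248)*X*E*O + (-624)*X*E*O*cO + (-1120)*X*E*O*cE + (-560)*X*E*O*y + (-330)*X*E*O^2 + (-112)*X*E*O^2*cO + (-560)*X*E*O^2*cE + (-280)*X*E*O^2*y + (-296)*X*E*O^3 + (-56)*X*E*O^4 + (-472)*X^2 + 890*X^2*cO + 64*X^2*cO^2 + 1504*X^2*cE + 1248*X^2*cE*cO + 1408*X^2*cE^2 + 752*X^2*y + 624*X^2*y*cO + 1408*X^2*y*cE + 352*X^2*y^2 + (-272)*X^2*O + 560*X^2*O*cO + 1392*X^2*O*cE + 696*X^2*O*y + 163*X^2*O^2 + 32*X^2*O^2*cO + 624*X^2*O^2*cE + 312*X^2*O^2*y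 + 272*X^2*O^3 + 16*X^2*O^4 + (-435)*X^2*E + 800*X^2*E*cO + 1376*X^2*E*cE + 688*X^2*E*y + (-64)*X^2*E*O + 224*X^2*E*O*cO + 896*X^2*E*O*cE + 448*X^2*E*O*y + 328*X^2*E*O^2 + 112*X^2*E*O^3 + 1645*X^3 + (-64)*X^3*cO + 208*X^3*cE + 104*X^3*y + 840*X^3*O + (-448)*X^3*O*cE + (-224)*X^3*O*y + (-16)*X^3*O^2 + 1248*X^3*E + (-128)*X^3*E*cO + (-576)*X^3*E*cE + (-288)*X^3*E*y + 336*X^3*E*O + (-64)*X^3*E*O^2 + (-1072)*X^4 + 128*X^4*cE + 64*X^4*y + (-256)*X^4*O + (-832)*X^4*E + 256*X^5) * hO + (42*cO + 197*cO^2 + 188*cO^3 + 4*cO^4 + 42*cE + 430*cE*cO + 740*cE*cO^2 + 112*cE*cO^3 + 197*cE^2 + 740*cE^2*cO + 280*cE^2*cO^2 + 188*cE^3 + 112*cE^3*cO + 4*cE^4 + 21*y + 215*y*cO + 370*y*cO^2 + 56*y*cO^3 + 197*y*cE + 740*y*cE*cO + 280*y*cE*cO^2 + 282*y*cE^2 +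 168*y*cE^2*cO + 8*y*cE^3 + 49*y^2 + 185*y^2*cO + 70*y^2*cO^2 + 141*y^2*cE + 84*y^2*cE*cO + 6*y^2*cE^2 + 23*y^3 + 14*y^3*cO + 2*y^3*cE + 21*O + 129*O*cO + 202*O*cO^2 + 56*O*cO^3 + 141*O*cE + 508*O*cE*cO + 328*O*cE*cO^2 + 266*O*cE^2 + 392*O*cE^2*cO + 120*O*cE^3 + 70*O*y + 254*O*y*cO + 164*O*y*cO^2 + 266*O*y*cE + 392*O*y*cE*cO + 180*O*y*cE^2 + 66*O*y^2 + 98*O*y^2*cO + 90*O*y^2*cE + 15*O*y^3 + 21*E + 141*E*cO + 266*E*cO^2 + 120*E*cO^3 + 129*E*cE + 508*E*cE*cO + 392*E*cE*cO^2 + 202*E*cE^2 + 328*E*cE^2*cO + 56*E*cE^3 + 64*E*y + 254*E*y*cO + 196*E*y*cO^2 + 202*E*y*cE + 328*E*y*cE*cO + 84*E*y*cE^2 + 50*E*y^2 + 82*E*y^2*cO + 42*E*y^2*cE + 7*E*y^3 + 21*E*O + 114*E*O*cO + 140*E*O*cO^2 + 16*E*O*cO^3 + 114*E*O*cE + 328*E*O*cE*cO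 + 112*E*O*cE*cO^2 + 140*E*O*cE^2 + 112*E*O*cE^2*cO + 16*E*O*cE^3 + 57*E*O*y + 164*E*O*y*cO + 56*E*O*y*cO^2 + 140*E*O*y*cE + 112*E*O*y*cE*cO + 24*E*O*y*cE^2 + 35*E*O*y^2 + 28*E*O*y^2*cO + 12*E*O*y^2*cE + 2*E*O*y^3 + (-21)*X + (-210)*X*cO + (-786)*X*cO^2 + (-344)*X*cO^3 + (-228)*X*cE + (-1780)*X*cE*cO + (-1624)*X*cE*cO^2 + (-938)*X*cE^2 + (-1736)*X*cE^2*cO + (-392)*X*cE^3 + (-114)*X*y + (-890)*X*y*cO + (-812)*X*y*cO^2 + (-938)*X*y*cE + (-1736)*X*y*cE*cO + (-588)*X*y*cE^2 + (-234)*X*y^2 + (-434)*X*y^2*cO + (-294)*X*y^2*cE + (-49)*X*y^3 + (-69)*X*O + (-456)*X*O*cO + (-516)*X*O*cO^2 + (-16)*X*O*cO^3 + (-564)*X*O*cE + (-1544)*X*O*cE*cO + (-336)*X*O*cE*cO^2 + (-852)*X*O*cE^2 + (-560)*X*O*cE^2*cO + (-112)*X*O*cE^3 + (-282)*X*O*y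 + (-772)*X*O*y*cO + (-168)*X*O*y*cO^2 + (-852)*X*O*y*cE + (-560)*X*O*y*cE*cO + (-168)*X*O*y*cE^2 + (-213)*X*O*y^2 + (-140)*X*O*y^2*cO + (-84)*X*O*y^2*cE + (-14)*X*O*y^3 + (-75)*X*E + (-538)*X*E*cO + (-788)*X*E*cO^2 + (-112)*X*E*cO^3 + (-546)*X*E*cE + (-1640)*X*E*cE*cO + (-560)*X*E*cE*cO^2 + (-612)*X*E*cE^2 + (-336)*X*E*cE^2*cO + (-16)*X*E*cE^3 + (-273)*X*E*y + (-820)*X*E*y*cO + (-280)*X*E*y*cO^2 + (-612)*X*E*y*cE + (-336)*X*E*y*cE*cO + (-24)*X*E*y*cE^2 + (-153)*X*E*y^2 + (-84)*X*E*y^2*cO + (-12)*X*E*y^2*cE + (-2)*X*E*y^3 + (-60)*X*E*O + (-396)*X*E*O*cO + (-328)*X*E*O*cO^2 + (-452)*X*E*O*cE + (-784)*X*E*O*cE*cO + (-360)*X*E*O*cE^2 + (-226)*X*E*O*y + (-392)*X*E*O*y*cO + (-360)*X*E*O*y*cE + (-90)*X*E*O*y^2 + 53*X^2 + 110*X^2*cO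 + 616*X^2*cO^2 + 32*X^2*cO^3 + 184*X^2*cE + 1880*X^2*cE*cO + 624*X^2*cE*cO^2 + 1184*X^2*cE^2 + 704*X^2*cE^2*cO + 48*X^2*cE^3 + 92*X^2*y + 940*X^2*y*cO + 312*X^2*y*cO^2 + 1184*X^2*y*cE + 704*X^2*y*cE*cO + 72*X^2*y*cE^2 + 296*X^2*y^2 + 176*X^2*y^2*cO + 36*X^2*y^2*cE + 6*X^2*y^3 + (-102)*X^2*O + 280*X^2*O*cO + 288*X^2*O*cO^2 + 452*X^2*O*cE + 976*X^2*O*cE*cO + 752*X^2*O*cE^2 + 226*X^2*O*y + 488*X^2*O*y*cO + 752*X^2*O*y*cE + 188*X^2*O*y^2 + (-79)*X^2*E + 284*X^2*E*cO + 472*X^2*E*cO^2 + 704*X^2*E*cE + 1280*X^2*E*cE*cO + 520*X^2*E*cE^2 + 352*X^2*E*y + 640*X^2*E*y*cO + 520*X^2*E*y*cE + 130*X^2*E*y^2 + (-108)*X^2*E*O + 264*X^2*E*O*cO + 112*X^2*E*O*cO^2 + 496*X^2*E*O*cE + 448*X^2*E*O*cE*cO + 144*X^2*E*O*cE^2 +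 248*X^2*E*O*y + 224*X^2*E*O*y*cO + 144*X^2*E*O*y*cE + 36*X^2*E*O*y^2 + 128*X^3 + 600*X^3*cO + (-48)*X^3*cO^2 + 388*X^3*cE + (-272)*X^3*cE*cO + (-640)*X^3*cE^2 + 194*X^3*y + (-136)*X^3*y*cO + (-640)*X^3*y*cE + (-160)*X^3*y^2 + 510*X^3*O + 248*X^3*O*cO + 144*X^3*O*cE + (-224)*X^3*O*cE*cO + (-160)*X^3*O*cE^2 + 72*X^3*O*y + (-112)*X^3*O*y*cO + (-160)*X^3*O*y*cE + (-40)*X^3*O*y^2 + 566*X^3*E + 408*X^3*E*cO + (-64)*X^3*E*cO^2 + (-224)*X^3*E*cE + (-288)*X^3*E*cE*cO + (-32)*X^3*E*cE^2 + (-112)*X^3*E*y + (-144)*X^3*E*y*cO + (-32)*X^3*E*y*cE + (-8)*X^3*E*y^2 + 476*X^3*E*O + 112*X^3*E*O*cO + (-224)*X^3*E*O*cE + (-112)*X^3*E*O*y + (-424)*X^4 + (-520)*X^4*cO + (-608)*X^4*cE + 64*X^4*cE*cO + 16*X^4*cE^2 + (-304)*X^4*y + 32*X^4*y*cO + 16*X^4*y*cE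 + 4*X^4*y^2 + (-560)*X^4*O + (-128)*X^4*O*cO + (-160)*X^4*O*cE + (-80)*X^4*O*y + (-652)*X^4*E + (-384)*X^4*E*cO + 176*X^4*E*cE + 88*X^4*E*y + (-408)*X^4*E*O + 32*X^4*E*O*cE + 16*X^4*E*O*y + 276*X^5 + 128*X^5*cO + (-32)*X^5*cE + (-16)*X^5*y + 112*X^5*O + 320*X^5*E + 96*X^5*E*O + (-64)*X^6) * h4

end Aux

/-- x·P(2^(2m)−2)(x) ≡ x + S_{2m−1}(x)² − 2x·S^e_m(x) (mod 4). -/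
theorem Ptm_pow_even_sub_two_mod_four (m : ℕ) (hm : 1 ≤ m) :
    ∀ k, (4 : ℤ) ∣ (X * Ptm (2 ^ (2 * m) - 2)
      - (X + Spoly (2 * m - 1) ^ 2 - 2 * X * SePoly m)).coeff k := by
  intro k
  obtain ⟨n, rfl⟩ : ∃ n, m = n + 1 := ⟨m - 1, by omega⟩
  have hmain := main_induction n
  have hidx : 2^(2*(n+1)) - 1 = (2^(2*(n+1)) - 2) + 1 := by
    have : (4:ℕ) ≤ 2^(2*(n+1)) := by
      calc (4:ℕ) = 2^2 := by norm_num
      _ ≤ 2^(2*(n+1)) := Nat.pow_le_pow_right (by norm_num) (by omega)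
    omega
  have hent := congrFun (congrFun hmain 1) 1
  rw [hidx, Bmat_entries (2^(2*(n+1)) - 2)] at hent
  have hlhs : rho.mapMatrix (!![Qtm ((2^(2*(n+1)) - 2)+1), X * Ptm ((2^(2*(n+1)) - 2)+1);
      Qtm (2^(2*(n+1)) - 2), X * Ptm (2^(2*(n+1)) - 2)]) 1 1
      = rho (X * Ptm (2^(2*(n+1)) - 2)) := rfl
  rw [hlhs] at hent
  have hrhs : NEmat n 1 1 = X + (sE (n+1) + sO n)^2 - 2*X*(sE (n+1)) := rfl
  rw [hrhs] at hent
  -- now transfer to the statement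
  have hSp : rho (Spoly (2*(n+1) - 1)) = sE (n+1) + sO n := by
    rw [Spoly, map_sum, ← sSplit n]
    refine Finset.sum_congr rfl fun j _ => ?_
    show Polynomial.map _ _ = _
    rw [Polynomial.map_pow, Polynomial.map_X]
  have hSe : rho (SePoly (n+1)) = sE (n+1) := by
    rw [SePoly, map_sum, sE]
    refine Finset.sum_congr rfl fun j _ => ?_
    show Polynomial.map _ _ = _
    rw [Polynomial.map_pow, Polynomial.map_X]
  have hXr : rho X = X := by simp [rho]
  have hzero : rho (X * Ptm (2 ^ (2 * (n+1)) - 2)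
      - (X + Spoly (2 * (n+1) - 1) ^ 2 - 2 * X * SePoly (n+1))) = 0 := by
    rw [_root_.map_sub, hent, _root_.map_sub, _root_.map_add, _root_.map_pow, hSp,
      _root_.map_mul, _root_.map_mul, hXr, hSe, show rho 2 = 2 from by simp [rho]]
    ring
  have hco : (Polynomial.map (Int.castRingHom (ZMod 4)) (X * Ptm (2 ^ (2 * (n+1)) - 2)
      - (X + Spoly (2 * (n+1) - 1) ^ 2 - 2 * X * SePoly (n+1)))).coeff k = 0 := by
    rw [show Polynomial.map (Int.castRingHom (ZMod 4)) _ = rho _ from rfl, hzero]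
    simp
  rw [Polynomial.coeff_map] at hco
  have := (ZMod.intCast_zmod_eq_zero_iff_dvd _ 4).mp hco
  exact_mod_cast this
end

section
/- For every integer m ≥ 1, the polynomial Q(2^{2m}−1)(x) is congruent to 1 − x + 2x^{2^{2m−1}} − S_{2m−1}(x)² + 2x·S^e_m(x) modulo 4, i.e. every coefficient of the difference is divisible by 4. -/
open Polynomial

/- ======================= auxiliary development ======================= -/

namespace TMaux

noncomputable section

abbrev R4 := Polynomial (ZMod 4)

lemma four_eq_zero : (4 : R4) = 0 := by
  exact_mod_cast CharP.cast_eq_zero R4 4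

/- ---------- basic tmSeq lemmas ---------- -/

lemma tm_zero : tmSeq 0 = 1 := by rw [tmSeq]

lemma tm_odd (n : ℕ) : tmSeq (2*n+1) = - tmSeq n := by
  rw [show 2*n+1 = (2*n)+1 from rfl, tmSeq]
  have h1 : ¬ ((2*n+1) % 2 = 0) := by omega
  have h2 : (2*n+1)/2 = n := by omega
  simp [h1, h2]

lemma tm_even (n : ℕ) : tmSeq (2*n+2) = tmSeq (n+1) := by
  rw [show 2*n+2 = (2*n+1)+1 from rfl, tmSeq]
  have h1 : (2*n+1+1) % 2 = 0 := by omega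
  have h2 : (2*n+1+1)/2 = n+1 := by omega
  simp [h1, h2]

lemma tm_one : tmSeq 1 = -1 := by
  have := tm_odd 0
  norm_num at this
  rw [this, tm_zero]

lemma tm_two : tmSeq 2 = -1 := by
  have := tm_even 0
  norm_num at this
  rw [this, tm_one]

lemma tm_double (n : ℕ) (hn : n ≠ 0) : tmSeq (2*n) = tmSeq n := by
  obtain ⟨m, rfl⟩ : ∃ m, n = m + 1 := ⟨n - 1, by omega⟩
  rw [show 2*(m+1) = 2*m+2 from by ring]
  exact tm_even m

lemma tm_shift : ∀ k : ℕ, ∀ i < 2^k, tmSeq (2^k + i) = - tmSeq i := by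
  intro k
  induction k with
  | zero =>
    intro i hi
    interval_cases i
    simpa [tm_zero] using tm_one
  | succ k ih =>
    intro i hi
    have hp : (2:ℕ)^(k+1) = 2 * 2^k := by rw [pow_succ]; ring
    rcases Nat.even_or_odd i with he | ho
    · obtain ⟨j, hj⟩ := he
      have hj2 : i = 2*j := by omega
      have hjlt : j < 2^k := by omega
      have e : 2^(k+1) + i = 2*(2^k + j) := by omega
      rw [e, tm_double _ (by positivity), ih j hjlt, hj2]
      by_cases hj0 : j = 0
      · subst hj0; norm_num
      · rw [tm_double _ hj0]
    · obtain ⟨j, hj⟩ := ho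
      have hjlt : j < 2^k := by omega
      have e : 2^(k+1) + i = 2*(2^k + j) + 1 := by omega
      rw [e, tm_odd, ih j hjlt, hj, tm_odd]

/- ---------- 2x2 matrices ---------- -/

@[ext] structure M2 where
  a : R4
  b : R4
  c : R4
  d : R4

def M2.mul (A B : M2) : M2 :=
  ⟨A.a * B.a + A.b * B.c, A.a * B.b + A.b * B.d,
   A.c * B.a + A.d * B.c, A.c * B.b + A.d * B.d⟩

lemma M2.one_mul (B : M2) : (⟨1,0,0,1⟩ : M2).mul B = B := by
  apply M2.ext <;> simp [M2.mul]

lemma M2.mul_assoc (A B C : M2) : (A.mul B).mul C = A.mul (B.mul C) := by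
  apply M2.ext <;> (simp only [M2.mul]; ring)

def mt (g : R4) : M2 := ⟨1, g, 1, 0⟩

def W (f : ℕ → R4) (a : ℕ) : ℕ → M2
  | 0 => ⟨1,0,0,1⟩
  | l+1 => (mt (f (a+l))).mul (W f a l)

lemma W_congr (f g : ℕ → R4) (a b : ℕ) :
    ∀ l, (∀ i, i < l → f (a+i) = g (b+i)) → W f a l = W g b l := by
  intro l
  induction l with
  | zero => intro _; rfl
  | succ l ih =>
    intro h
    simp only [W]
    rw [ih (fun i hi => h i (by omega)), h l (by omega)]

lemma W_add (f : ℕ → R4) (a l2 : ℕ) :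
    ∀ l1, W f a (l1 + l2) = (W f (a+l2) l1).mul (W f a l2) := by
  intro l1
  induction l1 with
  | zero => rw [Nat.zero_add]; exact (M2.one_mul _).symm
  | succ l1 ih =>
    rw [show l1 + 1 + l2 = (l1 + l2) + 1 from by omega]
    simp only [W]
    rw [ih, ← M2.mul_assoc, show a + (l1 + l2) = a + l2 + l1 from by omega]

/- ---------- the Thue–Morse matrix products ---------- -/

def tZ (n : ℕ) : ZMod 4 := ((tmSeq n : ℤ) : ZMod 4)

def tp (n : ℕ) : R4 := C (tZ n) * X
def tn (n : ℕ) : R4 := - (C (tZ n) * X)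

lemma tp_shift (k i : ℕ) (hi : i < 2^k) : tp (2^k + i) = tn i := by
  simp [tp, tn, tZ, tm_shift k i hi]

lemma tn_shift (k i : ℕ) (hi : i < 2^k) : tn (2^k + i) = tp i := by
  simp [tp, tn, tZ, tm_shift k i hi]

def DD (k : ℕ) : M2 := W tp 0 (2^k)
def EE (k : ℕ) : M2 := W tn 0 (2^k)

lemma DD_succ (k : ℕ) : DD (k+1) = (EE k).mul (DD k) := by
  unfold DD EE
  rw [show (2:ℕ)^(k+1) = 2^k + 2^k from by rw [pow_succ]; ring,
      W_add tp 0 (2^k) (2^k), Nat.zero_add]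
  congr 1
  exact W_congr tp tn (2^k) 0 (2^k)
    (fun i hi => by rw [Nat.zero_add]; exact tp_shift k i hi)

lemma EE_succ (k : ℕ) : EE (k+1) = (DD k).mul (EE k) := by
  unfold DD EE
  rw [show (2:ℕ)^(k+1) = 2^k + 2^k from by rw [pow_succ]; ring,
      W_add tn 0 (2^k) (2^k), Nat.zero_add]
  congr 1
  exact W_congr tn tp (2^k) 0 (2^k)
    (fun i hi => by rw [Nat.zero_add]; exact tn_shift k i hi)

/- ---------- connection to Qtm ---------- -/

def QR (n : ℕ) : R4 := (Qtm n).map (Int.castRingHom (ZMod 4))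

lemma QR_rec (n : ℕ) : QR (n+2) = QR (n+1) + tp (n+2) * QR n := by
  unfold QR
  rw [Qtm]
  rw [Polynomial.map_add, Polynomial.map_mul, Polynomial.map_mul,
      Polynomial.map_C, Polynomial.map_X]
  rfl

lemma QR_zero : QR 0 = 1 := by
  unfold QR; rw [Qtm]; simp

lemma QR_one : QR 1 = 1 - X := by
  unfold QR; rw [Qtm]
  rw [Polynomial.map_sub, Polynomial.map_one, Polynomial.map_X]

lemma htp0 : tp 0 = X := by simp [tp, tZ, tm_zero]
lemma htp1 : tp 1 = -X := by simp [tp, tZ, tm_one]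
lemma htp2 : tp 2 = -X := by simp [tp, tZ, tm_two]
lemma htn0 : tn 0 = -X := by simp [tn, tZ, tm_zero]

lemma QR_two : QR 2 = 1 - 2*X := by
  have h := QR_rec 0
  norm_num at h
  rw [h, QR_one, QR_zero, htp2]
  ring

lemma W_col (l : ℕ) :
    (W tp 3 l).a * QR 2 + (W tp 3 l).b * QR 1 = QR (l+2) ∧
    (W tp 3 l).c * QR 2 + (W tp 3 l).d * QR 1 = QR (l+1) := by
  induction l with
  | zero => constructor <;> simp [W]
  | succ l ih =>
    obtain ⟨ih1, ih2⟩ := ih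
    have hrec : QR (l+1+2) = QR (l+2) + tp (3+l) * QR (l+1) := by
      have h := QR_rec (l+1)
      rw [show l+1+1 = l+2 from by omega, show l+1+2 = 3+l from by omega] at h
      rw [show l+1+2 = 3+l from by omega]
      exact h
    constructor
    · simp only [W, M2.mul, mt]
      rw [hrec]
      linear_combination ih1 + tp (3+l) * ih2
    · simp only [W, M2.mul, mt]
      rw [show l+1+1 = l+2 from by omega]
      linear_combination ih1

lemma W03 : W tp 0 3 = ⟨1 - 2*X, X - X^2, 1 - X, X⟩ := by
  have h : W tp 0 3 = (mt (tp 2)).mul ((mt (tp 1)).mul ((mt (tp 0)).mul ⟨1,0,0,1⟩)) := rfl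
  rw [h, htp0, htp1, htp2]
  apply M2.ext <;> (simp only [M2.mul, mt]; ring)

lemma DD_a (k : ℕ) (hk : 2 ≤ k) : (DD k).a = QR (2^k - 1) := by
  have h4le : 4 ≤ 2^k := by
    calc (4:ℕ) = 2^2 := by norm_num
    _ ≤ 2^k := Nat.pow_le_pow_right (by norm_num) hk
  have hw : W tp 0 (2^k) = (W tp 3 (2^k - 3)).mul (W tp 0 3) := by
    nth_rewrite 1 [show (2:ℕ)^k = (2^k - 3) + 3 from by omega]
    have h := W_add tp 0 3 (2^k - 3)
    rwa [Nat.zero_add] at h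
  have : (DD k).a = (W tp 3 (2^k-3)).a * QR 2 + (W tp 3 (2^k-3)).b * QR 1 := by
    rw [DD, hw, W03, QR_two, QR_one]
    simp only [M2.mul]
  rw [this, (W_col (2^k-3)).1, show 2^k - 3 + 2 = 2^k - 1 from by omega]

/- ---------- the mod-4 polynomial sums ---------- -/

def sR (n : ℕ) : R4 := ∑ j ∈ Finset.range n, X ^ (2 ^ j)
def ttR (n : ℕ) : R4 := ∑ j ∈ Finset.range n, X ^ (2 ^ j) * sR j
def seR (m : ℕ) : R4 := ∑ j ∈ Finset.range m, X ^ (2 ^ (2 * j))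
def soR (m : ℕ) : R4 := ∑ j ∈ Finset.range m, X ^ (2 ^ (2 * j + 1))

lemma sR_succ (n : ℕ) : sR (n+1) = sR n + X^(2^n) := Finset.sum_range_succ _ n
lemma ttR_succ (n : ℕ) : ttR (n+1) = ttR n + X^(2^n) * sR n := Finset.sum_range_succ _ n
lemma seR_succ (m : ℕ) : seR (m+1) = seR m + X^(2^(2*m)) := Finset.sum_range_succ _ m
lemma soR_succ (m : ℕ) : soR (m+1) = soR m + X^(2^(2*m+1)) := Finset.sum_range_succ _ m

lemma sR_sq (n : ℕ) : sR n ^ 2 = sR (n+1) - X + 2 * ttR n := by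
  induction n with
  | zero => norm_num [sR, ttR, Finset.sum_range_one]
  | succ n ih =>
    have hx : (X:R4)^(2^(n+1)) = (X^(2^n))^2 := by rw [pow_succ, pow_mul]
    rw [sR_succ (n+1), sR_succ n, ttR_succ, hx]
    have ih' := ih
    rw [sR_succ n] at ih'
    linear_combination ih'

lemma se_so_even : ∀ m, seR m + soR m = sR (2*m) := by
  intro m
  induction m with
  | zero => simp [seR, soR, sR]
  | succ n ih =>
    have h1 : seR (n+1) + soR n = sR (2*n+1) := by
      rw [seR_succ, show sR (2*n+1) = sR (2*n) + X^(2^(2*n)) from sR_succ (2*n)]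
      linear_combination ih
    rw [soR_succ, show 2*(n+1) = (2*n+1)+1 from by omega, sR_succ]
    linear_combination h1

lemma se_so_odd (m : ℕ) : seR (m+1) + soR m = sR (2*m+1) := by
  rw [seR_succ, show sR (2*m+1) = sR (2*m) + X^(2^(2*m)) from sR_succ (2*m)]
  linear_combination se_so_even m

/- ---------- the main induction ---------- -/

lemma main : ∀ μ : ℕ,
    DD (2*μ+2) = ⟨1 - sR (2*μ+2) + 2*X^(2^(2*μ+1)) + 2*ttR (2*μ+1) + 2*X*seR (μ+1),
                  X + 2*X*soR μ,
                  1 + 2*sR (2*μ+1),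
                  sR (2*μ+2) + 2*ttR (2*μ+1) + 2*X*seR (μ+1)⟩ ∧
    EE (2*μ+2) = ⟨1 - sR (2*μ+2) + 2*X^(2^(2*μ+1)) + 2*ttR (2*μ+1) + 2*X*seR (μ+1) + 2*X,
                  X + 2*X*soR μ + 2*X,
                  1 + 2*sR (2*μ+1),
                  sR (2*μ+2) + 2*ttR (2*μ+1) + 2*X*seR (μ+1) + 2*X⟩ := by
  have h4 := four_eq_zero
  intro μ
  induction μ with
  | zero =>
    have hD0 : DD 0 = ⟨1, X, 1, 0⟩ := by
      have h : DD 0 = (mt (tp 0)).mul ⟨1,0,0,1⟩ := rfl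
      rw [h, htp0]
      apply M2.ext <;> (simp only [M2.mul, mt]; ring)
    have hE0 : EE 0 = ⟨1, -X, 1, 0⟩ := by
      have h : EE 0 = (mt (tn 0)).mul ⟨1,0,0,1⟩ := rfl
      rw [h, htn0]
      apply M2.ext <;> (simp only [M2.mul, mt]; ring)
    have hD1 : DD 1 = ⟨1-X, X, 1, X⟩ := by
      have h := DD_succ 0
      norm_num at h
      rw [h, hE0, hD0]
      apply M2.ext <;> (simp only [M2.mul]; ring)
    have hE1 : EE 1 = ⟨1+X, -X, 1, -X⟩ := by
      have h := EE_succ 0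
      norm_num at h
      rw [h, hD0, hE0]
      apply M2.ext <;> (simp only [M2.mul]; ring)
    have hD2 : DD 2 = ⟨1-X-X^2, X, 1-2*X, X-X^2⟩ := by
      have h := DD_succ 1
      norm_num at h
      rw [h, hE1, hD1]
      apply M2.ext <;> (simp only [M2.mul]; ring)
    have hE2 : EE 2 = ⟨1+X-X^2, -X, 1+2*X, -X-X^2⟩ := by
      have h := EE_succ 1
      norm_num at h
      rw [h, hD1, hE1]
      apply M2.ext <;> (simp only [M2.mul]; ring)
    have hsR1 : sR 1 = X := by norm_num [sR, Finset.sum_range_one]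
    have hsR2 : sR 2 = X + X^2 := by
      rw [show (2:ℕ) = 1+1 from rfl, sR_succ, hsR1]; norm_num
    have httR1 : ttR 1 = 0 := by
      norm_num [ttR, sR, Finset.sum_range_one]
    have hseR1 : seR 1 = X := by norm_num [seR, Finset.sum_range_one]
    have hsoR0 : soR 0 = 0 := by simp [soR]
    norm_num
    rw [hD2, hE2]
    constructor
    · apply M2.ext <;>
        simp only [hsR2, httR1, hseR1, hsoR0, hsR1]
      · linear_combination (-X^2 : R4) * h4
      · linear_combination (0 : R4) * h4
      · linear_combination (-X : R4) * h4
      · linear_combination (-X^2 : R4) * h4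
    · apply M2.ext <;>
        simp only [hsR2, httR1, hseR1, hsoR0, hsR1]
      · linear_combination (-X^2 : R4) * h4
      · linear_combination (-X : R4) * h4
      · linear_combination (-X^2 - X : R4) * h4
  | succ μ ih =>
    obtain ⟨hD, hE⟩ := ih
    -- helpers for the even→odd step
    have hq : (X:R4)^(2^(2*μ+2)) = (X^(2^(2*μ+1)))^2 := by
      rw [show 2*μ+2 = (2*μ+1)+1 from by omega, pow_succ, pow_mul]
    have hs2 : sR (2*μ+2) = sR (2*μ+1) + X^(2^(2*μ+1)) := by
      rw [show 2*μ+2 = (2*μ+1)+1 from by omega, sR_succ]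
    have hs3 : sR (2*μ+3) = sR (2*μ+1) + X^(2^(2*μ+1)) + (X^(2^(2*μ+1)))^2 := by
      rw [show 2*μ+3 = (2*μ+2)+1 from by omega, sR_succ, hq, hs2]
    have ht2 : ttR (2*μ+2) = ttR (2*μ+1) + X^(2^(2*μ+1)) * sR (2*μ+1) := by
      rw [show 2*μ+2 = (2*μ+1)+1 from by omega, ttR_succ]
    have hso1 : soR (μ+1) = soR μ + X^(2^(2*μ+1)) := soR_succ μ
    have hR1 : sR (2*μ+1)^2 = sR (2*μ+1) + X^(2^(2*μ+1)) - X + 2*ttR (2*μ+1) := by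
      have h := sR_sq (2*μ+1)
      rwa [show 2*μ+1+1 = 2*μ+2 from by omega, hs2] at h
    have hR2 : seR (μ+1) + soR μ = sR (2*μ+1) := se_so_odd μ
    have hDsucc : DD (2*μ+3) = (EE (2*μ+2)).mul (DD (2*μ+2)) := by
      rw [show 2*μ+3 = (2*μ+2)+1 from by omega]; exact DD_succ _
    have hEsucc : EE (2*μ+3) = (DD (2*μ+2)).mul (EE (2*μ+2)) := by
      rw [show 2*μ+3 = (2*μ+2)+1 from by omega]; exact EE_succ _
    set sv := sR (2*μ+1) with hsv
    set pv := (X:R4)^(2^(2*μ+1)) with hpv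
    set tv := ttR (2*μ+1) with htv
    set ev := seR (μ+1) with hev
    set ov := soR μ with hov
    have hDo : DD (2*μ+3) =
        ⟨1 - sR (2*μ+3) + 2*X^(2^(2*μ+2)) + 2*ttR (2*μ+2) + 2*X*soR (μ+1),
         X + 2*X*ev + 2*X^2,
         1 + 2*sR (2*μ+2) + 2*X,
         sR (2*μ+3) + 2*ttR (2*μ+2) + 2*X*soR (μ+1)⟩ := by
      rw [hDsucc, hD, hE]
      apply M2.ext <;> simp only [M2.mul, hs3, hq, ht2, hso1, hs2]
      · linear_combination (1 - 4*X + 4*X^2) * hR1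
          + (4*X + 8*X*tv + 4*X*pv - 4*X*sv + 4*X^2 - 4*X^2*ov + 4*X^2*ev + 4*X^2*sv) * hR2
          + (tv + tv^2 + pv + pv*tv - sv*tv - sv*pv + X - X*ov - X*tv - 2*X*tv*ov - X*pv
             - X*pv*ov + X*sv + 2*X*sv*ov + 2*X*sv*tv + X*sv*pv + X^2 - X^2*ov + X^2*ov^2
             + 2*X^2*tv + X^2*pv + 2*X^2*sv - 2*X^2*sv*ov - X^3) * h4
      · linear_combination (-2*X + 8*X^2 + 8*X^2*ov) * hR2
          + (X*ov + 2*X*tv + 2*X*tv*ov + X*pv + X*pv*ov - X^2*ov - 2*X^2*ov^2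
             + 2*X^2*sv + 2*X^2*sv*ov) * h4
      · linear_combination (8*X) * hR1 + (4*X + 8*X*sv) * hR2
          + (tv + 2*sv*tv + sv*pv - X*ov + 4*X*tv + 2*X*pv + 4*X*sv - 2*X*sv*ov - 2*X^2) * h4
      · linear_combination (1 + 4*X + 4*X^2) * hR1
          + (8*X*tv + 4*X*pv + 4*X*sv + 4*X^2 - 4*X^2*ov + 4*X^2*ev + 4*X^2*sv) * hR2
          + (tv^2 + pv*tv + sv*tv + 3*X*tv - 2*X*tv*ov + X*pv - X*pv*ov + 2*X*sv
             + 2*X*sv*tv + X*sv*pv - X^2 - X^2*ov + X^2*ov^2 + 2*X^2*tv + X^2*pv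
             + 2*X^2*sv - 2*X^2*sv*ov - X^3) * h4
    have hEo : EE (2*μ+3) =
        ⟨1 - sR (2*μ+3) + 2*X^(2^(2*μ+2)) + 2*ttR (2*μ+2) + 2*X*soR (μ+1) + 2*X,
         X + 2*X*ev + 2*X^2 + 2*X,
         1 + 2*sR (2*μ+2) + 2*X,
         sR (2*μ+3) + 2*ttR (2*μ+2) + 2*X*soR (μ+1) + 2*X⟩ := by
      rw [hEsucc, hD, hE]
      apply M2.ext <;> simp only [M2.mul, hs3, hq, ht2, hso1, hs2]
      · linear_combination (1 - 4*X + 4*X^2) * hR1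
          + (4*X + 8*X*tv + 4*X*pv - 4*X*sv + 4*X^2 - 4*X^2*ov + 4*X^2*ev + 4*X^2*sv) * hR2
          + (tv + tv^2 + pv + pv*tv - sv*tv - sv*pv - X*ov - X*tv - 2*X*tv*ov - X*pv
             - X*pv*ov + 2*X*sv*ov + 2*X*sv*tv + X*sv*pv + X^2 - X^2*ov + X^2*ov^2
             + 2*X^2*tv + X^2*pv + 2*X^2*sv - 2*X^2*sv*ov - X^3) * h4
      · linear_combination (-2*X + 8*X^2 + 8*X^2*ov) * hR2
          + (X*ov + 2*X*tv + 2*X*tv*ov + X*pv + X*pv*ov - X*sv - X^2*ov - 2*X^2*ov^2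
             + 2*X^2*sv + 2*X^2*sv*ov) * h4
      · linear_combination (8*X) * hR1 + (4*X + 8*X*sv) * hR2
          + (tv + 2*sv*tv + sv*pv - X*ov + 4*X*tv + 2*X*pv + 4*X*sv - 2*X*sv*ov - 2*X^2) * h4
      · linear_combination (1 + 4*X + 4*X^2) * hR1
          + (8*X*tv + 4*X*pv + 4*X*sv + 4*X^2 - 4*X^2*ov + 4*X^2*ev + 4*X^2*sv) * hR2
          + (tv^2 + pv*tv + sv*tv + 3*X*tv - 2*X*tv*ov + X*pv - X*pv*ov + 3*X*sv
             + 2*X*sv*tv + X*sv*pv - X^2 - X^2*ov + X^2*ov^2 + 2*X^2*tv + X^2*pv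
             + 2*X^2*sv - 2*X^2*sv*ov - X^3) * h4
    -- helpers for the odd→even step
    clear hD hE
    have hr : (X:R4)^(2^(2*μ+3)) = (X^(2^(2*μ+2)))^2 := by
      rw [show 2*μ+3 = (2*μ+2)+1 from by omega, pow_succ, pow_mul]
    have hs3b : sR (2*μ+3) = sR (2*μ+2) + X^(2^(2*μ+2)) := by
      rw [show 2*μ+3 = (2*μ+2)+1 from by omega, sR_succ]
    have hs4 : sR (2*μ+4) = sR (2*μ+2) + X^(2^(2*μ+2)) + (X^(2^(2*μ+2)))^2 := by
      rw [show 2*μ+4 = (2*μ+3)+1 from by omega, sR_succ, hr, hs3b]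
    have ht3 : ttR (2*μ+3) = ttR (2*μ+2) + X^(2^(2*μ+2)) * sR (2*μ+2) := by
      rw [show 2*μ+3 = (2*μ+2)+1 from by omega, ttR_succ]
    have hse2 : seR (μ+2) = seR (μ+1) + X^(2^(2*μ+2)) := by
      rw [show μ+2 = (μ+1)+1 from rfl, seR_succ, show 2*(μ+1) = 2*μ+2 from by omega]
    have hR1b : sR (2*μ+2)^2 = sR (2*μ+2) + X^(2^(2*μ+2)) - X + 2*ttR (2*μ+2) := by
      have h := sR_sq (2*μ+2)
      rwa [show 2*μ+2+1 = 2*μ+3 from by omega, hs3b] at h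
    have hR2b : seR (μ+1) + soR (μ+1) = sR (2*μ+2) := by
      have h := se_so_even (μ+1)
      rwa [show 2*(μ+1) = 2*μ+2 from by omega] at h
    have hDsucc4 : DD (2*μ+4) = (EE (2*μ+3)).mul (DD (2*μ+3)) := by
      rw [show 2*μ+4 = (2*μ+3)+1 from by omega]; exact DD_succ _
    have hEsucc4 : EE (2*μ+4) = (DD (2*μ+3)).mul (EE (2*μ+3)) := by
      rw [show 2*μ+4 = (2*μ+3)+1 from by omega]; exact EE_succ _
    rw [show 2*(μ+1)+2 = 2*μ+4 from by omega, show 2*(μ+1)+1 = 2*μ+3 from by omega,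
        show μ+1+1 = μ+2 from rfl]
    set sw := sR (2*μ+2) with hsw
    set qw := (X:R4)^(2^(2*μ+2)) with hqw
    set tw := ttR (2*μ+2) with htw
    set ow := soR (μ+1) with how
    constructor
    · rw [hDsucc4, hDo, hEo]
      apply M2.ext <;> simp only [M2.mul, hs4, hr, ht3, hse2, hs3b]
      · linear_combination (1 + 4*X) * hR1b + (4*X*sw + 4*X^2) * hR2b
          + (tw + tw^2 + qw + qw*tw - sw*tw - sw*qw + X + X*ow + 3*X*tw + 2*X*tw*ow
             + X*qw + X*qw*ow + 2*X*sw - 2*X*sw*ow + X^2 + X^2*ow^2 + 2*X^2*sw + X^3) * h4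
      · linear_combination (2*X + 8*X*tw + 4*X*qw + 4*X^2 + 8*X^2*ow) * hR2b
          + (-X*ow + 2*X*tw - 2*X*tw*ow + X*qw - X*qw*ow + X*sw + 2*X*sw*tw + X*sw*qw
             + X^2 + X^2*ow - 2*X^2*ow^2 + 2*X^2*tw + X^2*qw + X^2*sw + 2*X^2*sw*ow
             + X^3 + 2*X^3*ow) * h4
      · linear_combination (tw + 2*sw*tw + sw*qw + X + X*ow + 2*X*tw + X*qw + X*sw
             + 2*X*sw*ow + X^2 + 2*X^2*ow) * h4
      · linear_combination (1 + 4*X) * hR1b + (4*X*sw + 4*X^2) * hR2b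
          + (tw^2 + qw*tw + sw*tw + 3*X*tw + 2*X*tw*ow + X*qw + X*qw*ow + 2*X*sw
             + X^2*ow^2 + 2*X^2*sw + X^3) * h4
    · rw [hEsucc4, hDo, hEo]
      apply M2.ext <;> simp only [M2.mul, hs4, hr, ht3, hse2, hs3b]
      · linear_combination (1 + 4*X) * hR1b + (4*X*sw + 4*X^2) * hR2b
          + (tw + tw^2 + qw + qw*tw - sw*tw - sw*qw + X*ow + 3*X*tw + 2*X*tw*ow + X*qw
             + X*qw*ow + X*sw - 2*X*sw*ow + X^2*ow^2 + 2*X^2*sw + X^3) * h4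
      · linear_combination (2*X + 8*X*tw + 4*X*qw + 4*X^2 + 8*X^2*ow) * hR2b
          + (-X*ow + 2*X*tw - 2*X*tw*ow + X*qw - X*qw*ow + 2*X*sw*tw + X*sw*qw + X^2
             + X^2*ow - 2*X^2*ow^2 + 2*X^2*tw + X^2*qw + X^2*sw + 2*X^2*sw*ow
             + X^3 + 2*X^3*ow) * h4
      · linear_combination (tw + 2*sw*tw + sw*qw + X + X*ow + 2*X*tw + X*qw + X*sw
             + 2*X*sw*ow + X^2 + 2*X^2*ow) * h4
      · linear_combination (1 + 4*X) * hR1b + (4*X*sw + 4*X^2) * hR2b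
          + (tw^2 + qw*tw + sw*tw + 3*X*tw + 2*X*tw*ow + X*qw + X*qw*ow + 3*X*sw
             + X^2 + X^2*ow^2 + 2*X^2*sw + X^3) * h4

end

end TMaux

open TMaux in
/-- Q(2^(2m)−1)(x) ≡ 1 − x + 2x^(2^(2m−1)) − S_{2m−1}(x)² + 2x·S^e_m(x) (mod 4). -/
theorem Qtm_pow_even_sub_one_mod_four (m : ℕ) (hm : 1 ≤ m) :
    ∀ k, (4 : ℤ) ∣ (Qtm (2 ^ (2 * m) - 1)
      - (1 - X + 2 * X ^ (2 ^ (2 * m - 1)) - Spoly (2 * m - 1) ^ 2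
          + 2 * X * SePoly m)).coeff k := by
  obtain ⟨μ, rfl⟩ : ∃ μ, m = μ + 1 := ⟨m - 1, by omega⟩
  intro k
  have h4 := four_eq_zero
  have hQRval : QR (2^(2*μ+2) - 1)
      = 1 - X + 2*X^(2^(2*μ+1)) - sR (2*μ+1)^2 + 2*X*seR (μ+1) := by
    rw [← DD_a (2*μ+2) (by omega), (main μ).1]
    have hR1 := sR_sq (2*μ+1)
    rw [show 2*μ+1+1 = 2*μ+2 from by omega] at hR1
    simp only []
    linear_combination hR1 + ttR (2*μ+1) * h4
  have hzero : ((Qtm (2^(2*(μ+1)) - 1)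
      - (1 - X + 2 * X ^ (2 ^ (2 * (μ+1) - 1)) - Spoly (2 * (μ+1) - 1) ^ 2
          + 2 * X * SePoly (μ+1))).map (Int.castRingHom (ZMod 4))) = 0 := by
    rw [Polynomial.map_sub]
    have h1 : (Qtm (2^(2*(μ+1)) - 1)).map (Int.castRingHom (ZMod 4))
        = QR (2^(2*μ+2) - 1) := by
      rw [show 2*(μ+1) = 2*μ+2 from by omega]; rfl
    have h2 : ((1 - X + 2 * X ^ (2 ^ (2 * (μ+1) - 1)) - Spoly (2 * (μ+1) - 1) ^ 2
          + 2 * X * SePoly (μ+1)) : ℤ[X]).map (Int.castRingHom (ZMod 4))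
        = 1 - X + 2*X^(2^(2*μ+1)) - sR (2*μ+1)^2 + 2*X*seR (μ+1) := by
      rw [show 2*(μ+1)-1 = 2*μ+1 from by omega]
      simp only [Polynomial.map_add, Polynomial.map_sub, Polynomial.map_mul,
        Polynomial.map_pow, Polynomial.map_one, Polynomial.map_X, Polynomial.map_ofNat,
        Spoly, SePoly, sR, seR, Polynomial.map_sum]
    rw [h1, h2, hQRval, sub_self]
  have hc := congrArg (fun p => Polynomial.coeff p k) hzero
  simp only [Polynomial.coeff_map, Polynomial.coeff_zero] at hc
  have hd := (ZMod.intCast_zmod_eq_zero_iff_dvd _ 4).mp (by exact_mod_cast hc)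
  exact_mod_cast hd
end
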